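/- arXiv:1708.00590 — 11 statements merged into one kernel-verified Lean document; each statement's English description precedes it below -/
import Mathlib

section
/- Let V and Q be real vector spaces, H a real inner product space, ι : V → H a linear map, and let A, C : V × V → ℝ and B : V × Q → ℝ be bilinear forms with A(ξ,ζ) = C(ζ,ξ) for all ξ, ζ ∈ V. Let f, y_Ω ∈ H and ū, ũ ∈ H. Suppose (ȳ, p̄), (ỹ, p̃) ∈ V × Q satisfy A(ȳ,ξ) − B(ξ,p̄) = ⟨f + ū, ι ξ⟩ and A(ỹ,ξ) − B(ξ,p̃) = ⟨f + ũ, ι ξ⟩ for all ξ ∈ V, with B(ȳ,φ) = B(ỹ,φ) = 0 for all φ ∈ Q; and suppose (w̄, q̄), (w̃, q̃) ∈ V × Q satisfy C(w̄,ζ) + B(ζ,q̄) = ⟨ι ȳ − y_Ω, ι ζ⟩ and C(w̃,ζ) + B(ζ,q̃) = ⟨ι ỹ − y_Ω, ι ζ⟩ for all ζ ∈ V, with B(w̄,φ) = B(w̃,φ) = 0 for all φ ∈ Q. Then ⟨ũ − ū, ι(w̄ − w̃)⟩ = −‖ι(ȳ − ỹ)‖² ≤ 0. -/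
open scoped RealInnerProductSpace

/-- For the states `(ȳ,p̄)`, `(ỹ,p̃)` associated with controls `ū`, `ũ`, and the
corresponding adjoint states `(w̄,q̄)`, `(w̃,q̃)`, one has
`⟨ũ − ū, ι(w̄ − w̃)⟩ = −‖ι(ȳ − ỹ)‖² ≤ 0`. -/
theorem stmt_4
    {V Q H : Type*} [AddCommGroup V] [Module ℝ V] [AddCommGroup Q] [Module ℝ Q]
    [NormedAddCommGroup H] [InnerProductSpace ℝ H]
    (ι : V →ₗ[ℝ] H)
    (A Cb : V →ₗ[ℝ] V →ₗ[ℝ] ℝ) (B : V →ₗ[ℝ] Q →ₗ[ℝ] ℝ)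
    (hAC : ∀ ξ ζ : V, A ξ ζ = Cb ζ ξ)
    (f yΩ : H) (ubar utilde : H)
    (ybar ytilde : V) (pbar ptilde : Q) (wbar wtilde : V) (qbar qtilde : Q)
    (hst : ∀ ξ : V, A ybar ξ - B ξ pbar = ⟪f + ubar, ι ξ⟫)
    (hsttilde : ∀ ξ : V, A ytilde ξ - B ξ ptilde = ⟪f + utilde, ι ξ⟫)
    (hydiv : ∀ φ : Q, B ybar φ = 0)
    (hytildediv : ∀ φ : Q, B ytilde φ = 0)
    (had : ∀ ζ : V, Cb wbar ζ + B ζ qbar = ⟪ι ybar - yΩ, ι ζ⟫)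
    (hadtilde : ∀ ζ : V, Cb wtilde ζ + B ζ qtilde = ⟪ι ytilde - yΩ, ι ζ⟫)
    (hwdiv : ∀ φ : Q, B wbar φ = 0)
    (hwtildediv : ∀ φ : Q, B wtilde φ = 0) :
    ⟪utilde - ubar, ι (wbar - wtilde)⟫ = -‖ι (ybar - ytilde)‖ ^ 2 ∧
      ⟪utilde - ubar, ι (wbar - wtilde)⟫ ≤ 0 := by
  have e1 := hst (wbar - wtilde)
  have e2 := hsttilde (wbar - wtilde)
  have e3 := had (ybar - ytilde)
  have e4 := hadtilde (ybar - ytilde)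
  have key : ⟪utilde - ubar, ι (wbar - wtilde)⟫ = -‖ι (ybar - ytilde)‖ ^ 2 := by
    rw [← real_inner_self_eq_norm_sq]
    simp only [hAC, map_sub, LinearMap.sub_apply, inner_add_left, inner_sub_left,
      inner_sub_right, hwdiv, hwtildediv, hydiv, hytildediv, sub_zero] at e1 e2 e3 e4 ⊢
    rw [real_inner_comm (ι ybar) (ι ytilde)] at e4 ⊢
    linear_combination e1 - e2 - e3 + e4
  exact ⟨key, key ▸ neg_nonpos_of_nonneg (by positivity)⟩
end

section
/- Let V and Q be real vector spaces, H a real Hilbert space, ι : V → H a linear map, and A, C : V × V → ℝ, B : V × Q → ℝ bilinear forms with A(ξ,ζ) = C(ζ,ξ) for all ξ, ζ ∈ V. Let U_ad ⊆ H be a set, θ > 0, f, y_Ω ∈ H, ū, ũ ∈ U_ad and w̄_T ∈ V. Assume: (a) (ȳ, p̄, w̄, q̄, ū) satisfies the optimality system A(ȳ,ξ) − B(ξ,p̄) = ⟨f + ū, ι ξ⟩, C(w̄,ζ) + B(ζ,q̄) = ⟨ι ȳ − y_Ω, ι ζ⟩ for all ξ, ζ ∈ V, B(ȳ,φ) = B(w̄,φ)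 = 0 for all φ ∈ Q, and ⟨ι w̄ + θ ū, u − ū⟩ ≥ 0 for all u ∈ U_ad; (b) ⟨ι w̄_T + θ ũ, u − ũ⟩ ≥ 0 for all u ∈ U_ad; (c) (ỹ, p̃) satisfies A(ỹ,ξ) − B(ξ,p̃) = ⟨f + ũ, ι ξ⟩ for all ξ ∈ V and B(ỹ,φ) = 0 for all φ ∈ Q; (d) (w̃, q̃) satisfies C(w̃,ζ) + B(ζ,q̃) = ⟨ι ỹ − y_Ω, ι ζ⟩ for all ζ ∈ V and B(w̃,φ) = 0 for all φ ∈ Q; (e) (ŵ, q̂) ∈ V × Q is arbitrary. Then ‖ū − ũ‖² ≤ (2/θ²) ‖ι(w̃ − ŵ)‖² + (2/θ²) ‖ι(ŵ − w̄_T)‖². -/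
open scoped RealInnerProductSpace

/-!
Testing the two variational inequalities with each other's control gives
`θ‖ū − ũ‖² ≤ ⟪ι w̄_T − ι w̄, ū − ũ⟫`. Split `w̄_T − w̄` through `w̃` and `ŵ`. The part
`⟪ū − ũ, ι(w̄ − w̃)⟫` equals `‖ι(ȳ − ỹ)‖² ≥ 0` (the adjoint identity, using `A = Cᵀ` and the
divergence constraints to kill the pressures), so it only helps; the other two parts are bounded by
Cauchy–Schwarz, and `θ d ≤ a + b` yields `θ² d² ≤ (a + b)² ≤ 2(a² + b²)`.
-/

section VariationalInequality

variable {H : Type*} [NormedAddCommGroup H] [InnerProductSpace ℝ H]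

theorem mul_norm_sub_sq_le_inner_of_variational_ineq {K : Set H} {θ : ℝ} {g₁ g₂ u₁ u₂ : H}
    (hu₁ : u₁ ∈ K) (hu₂ : u₂ ∈ K)
    (hvi₁ : ∀ u ∈ K, 0 ≤ ⟪g₁ + θ • u₁, u - u₁⟫) (hvi₂ : ∀ u ∈ K, 0 ≤ ⟪g₂ + θ • u₂, u - u₂⟫) :
    θ * ‖u₁ - u₂‖ ^ 2 ≤ ⟪g₂ - g₁, u₁ - u₂⟫ := by
  have h₁ := hvi₁ u₂ hu₂
  have h₂ := hvi₂ u₁ hu₁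
  have hsum : ⟪g₁ + θ • u₁, u₂ - u₁⟫ + ⟪g₂ + θ • u₂, u₁ - u₂⟫ =
      ⟪g₂ - g₁, u₁ - u₂⟫ - θ * ‖u₁ - u₂‖ ^ 2 := by
    rw [← real_inner_self_eq_norm_sq, ← neg_sub u₁ u₂]
    simp only [inner_neg_right, inner_add_left, inner_sub_left, real_inner_smul_left]
    ring
  linarith

end VariationalInequality

section SaddlePoint

variable {V Q H : Type*} [AddCommGroup V] [Module ℝ V] [AddCommGroup Q] [Module ℝ Q]
  [NormedAddCommGroup H] [InnerProductSpace ℝ H]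

theorem inner_eq_of_saddle_point_adjoint (ι : V →ₗ[ℝ] H) (A Cb : V →ₗ[ℝ] V →ₗ[ℝ] ℝ)
    (B : V →ₗ[ℝ] Q →ₗ[ℝ] ℝ) (hAC : ∀ ξ ζ : V, A ξ ζ = Cb ζ ξ)
    {u g : H} {y w : V} {p q : Q}
    (hy : ∀ ξ : V, A y ξ - B ξ p = ⟪u, ι ξ⟫) (hw : ∀ ζ : V, Cb w ζ + B ζ q = ⟪g, ι ζ⟫)
    (hyB : ∀ φ : Q, B y φ = 0) (hwB : ∀ φ : Q, B w φ = 0) :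
    ⟪u, ι w⟫ = ⟪g, ι y⟫ := by
  rw [← hy w, ← hw y, hwB, hyB, hAC]
  ring

end SaddlePoint

theorem sq_le_of_mul_sq_le_add_mul {θ a b d : ℝ} (hθ : 0 < θ) (h : θ * d ^ 2 ≤ a * d + b * d) :
    d ^ 2 ≤ 2 / θ ^ 2 * a ^ 2 + 2 / θ ^ 2 * b ^ 2 := by
  rw [div_mul_eq_mul_div, div_mul_eq_mul_div, ← add_div, le_div_iff₀ (by positivity)]
  nlinarith [sq_nonneg (a + b - θ * d), sq_nonneg (a - b)]

theorem stmt_5_general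
    {V Q H : Type*} [AddCommGroup V] [Module ℝ V] [AddCommGroup Q] [Module ℝ Q]
    [NormedAddCommGroup H] [InnerProductSpace ℝ H]
    (ι : V →ₗ[ℝ] H)
    (A Cb : V →ₗ[ℝ] V →ₗ[ℝ] ℝ) (B : V →ₗ[ℝ] Q →ₗ[ℝ] ℝ)
    (hAC : ∀ ξ ζ : V, A ξ ζ = Cb ζ ξ)
    (Uad : Set H) (θ : ℝ) (hθ : 0 < θ) (f yΩ : H)
    (ubar utilde : H) (hubar : ubar ∈ Uad) (hutilde : utilde ∈ Uad)
    (wT : V)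
    -- (a) the continuous optimality system
    (ybar : V) (pbar : Q) (wbar : V) (qbar : Q)
    (hst : ∀ ξ : V, A ybar ξ - B ξ pbar = ⟪f + ubar, ι ξ⟫)
    (had : ∀ ζ : V, Cb wbar ζ + B ζ qbar = ⟪ι ybar - yΩ, ι ζ⟫)
    (hydiv : ∀ φ : Q, B ybar φ = 0) (hwdiv : ∀ φ : Q, B wbar φ = 0)
    (hvi : ∀ u ∈ Uad, 0 ≤ ⟪ι wbar + θ • ubar, u - ubar⟫)
    -- (b) the variational inequality for the auxiliary control
    (hvitilde : ∀ u ∈ Uad, 0 ≤ ⟪ι wT + θ • utilde, u - utilde⟫)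
    -- (c) the auxiliary state
    (ytilde : V) (ptilde : Q)
    (hsttilde : ∀ ξ : V, A ytilde ξ - B ξ ptilde = ⟪f + utilde, ι ξ⟫)
    (hytildediv : ∀ φ : Q, B ytilde φ = 0)
    -- (d) the auxiliary adjoint state
    (wtilde : V) (qtilde : Q)
    (hadtilde : ∀ ζ : V, Cb wtilde ζ + B ζ qtilde = ⟪ι ytilde - yΩ, ι ζ⟫)
    (hwtildediv : ∀ φ : Q, B wtilde φ = 0)
    -- (e) an arbitrary pair
    (what : V) :
    ‖ubar - utilde‖ ^ 2 ≤
      (2 / θ ^ 2) * ‖ι (wtilde - what)‖ ^ 2 + (2 / θ ^ 2) * ‖ι (what - wT)‖ ^ 2 := by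
  have hstate : ∀ ξ : V, A (ybar - ytilde) ξ - B ξ (pbar - ptilde) = ⟪ubar - utilde, ι ξ⟫ := by
    intro ξ
    rw [← add_sub_add_left_eq_sub ubar utilde f, inner_sub_left, ← hst, ← hsttilde]
    simp only [map_sub, LinearMap.sub_apply]
    ring
  have hadjoint : ∀ ζ : V, Cb (wbar - wtilde) ζ + B ζ (qbar - qtilde) =
      ⟪ι (ybar - ytilde), ι ζ⟫ := by
    intro ζ
    rw [map_sub ι, ← sub_sub_sub_cancel_right _ _ yΩ, inner_sub_left, ← had, ← hadtilde]
    simp only [map_sub, LinearMap.sub_apply]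
    ring
  have hmono : 0 ≤ ⟪ι (wbar - wtilde), ubar - utilde⟫ := by
    rw [real_inner_comm, inner_eq_of_saddle_point_adjoint ι A Cb B hAC hstate hadjoint
      (fun φ => by simp [hydiv, hytildediv]) (fun φ => by simp [hwdiv, hwtildediv])]
    exact real_inner_self_nonneg
  have hvi_diff := mul_norm_sub_sq_le_inner_of_variational_ineq hubar hutilde hvi hvitilde
  have hsplit : ι wT - ι wbar = -ι (wbar - wtilde) - ι (wtilde - what) - ι (what - wT) := by
    simp only [map_sub]
    abel
  rw [hsplit, inner_sub_left, inner_sub_left, inner_neg_left] at hvi_diff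
  apply sq_le_of_mul_sq_le_add_mul hθ
  linarith [(neg_le_abs _).trans (abs_real_inner_le_norm (ι (wtilde - what)) (ubar - utilde)),
    (neg_le_abs _).trans (abs_real_inner_le_norm (ι (what - wT)) (ubar - utilde))]

/-- Key estimate for the control error between the optimal control `ū` and the auxiliary
control `ũ`: `‖ū − ũ‖² ≤ (2/θ²)‖ι(w̃ − ŵ)‖² + (2/θ²)‖ι(ŵ − w̄_T)‖²`. -/
theorem stmt_5
    {V Q H : Type*} [AddCommGroup V] [Module ℝ V] [AddCommGroup Q] [Module ℝ Q]
    [NormedAddCommGroup H] [InnerProductSpace ℝ H] [CompleteSpace H]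
    (ι : V →ₗ[ℝ] H)
    (A Cb : V →ₗ[ℝ] V →ₗ[ℝ] ℝ) (B : V →ₗ[ℝ] Q →ₗ[ℝ] ℝ)
    (hAC : ∀ ξ ζ : V, A ξ ζ = Cb ζ ξ)
    (Uad : Set H) (θ : ℝ) (hθ : 0 < θ) (f yΩ : H)
    (ubar utilde : H) (hubar : ubar ∈ Uad) (hutilde : utilde ∈ Uad)
    (wT : V)
    -- (a) the continuous optimality system
    (ybar : V) (pbar : Q) (wbar : V) (qbar : Q)
    (hst : ∀ ξ : V, A ybar ξ - B ξ pbar = ⟪f + ubar, ι ξ⟫)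
    (had : ∀ ζ : V, Cb wbar ζ + B ζ qbar = ⟪ι ybar - yΩ, ι ζ⟫)
    (hydiv : ∀ φ : Q, B ybar φ = 0) (hwdiv : ∀ φ : Q, B wbar φ = 0)
    (hvi : ∀ u ∈ Uad, 0 ≤ ⟪ι wbar + θ • ubar, u - ubar⟫)
    -- (b) the variational inequality for the auxiliary control
    (hvitilde : ∀ u ∈ Uad, 0 ≤ ⟪ι wT + θ • utilde, u - utilde⟫)
    -- (c) the auxiliary state
    (ytilde : V) (ptilde : Q)
    (hsttilde : ∀ ξ : V, A ytilde ξ - B ξ ptilde = ⟪f + utilde, ι ξ⟫)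
    (hytildediv : ∀ φ : Q, B ytilde φ = 0)
    -- (d) the auxiliary adjoint state
    (wtilde : V) (qtilde : Q)
    (hadtilde : ∀ ζ : V, Cb wtilde ζ + B ζ qtilde = ⟪ι ytilde - yΩ, ι ζ⟫)
    (hwtildediv : ∀ φ : Q, B wtilde φ = 0)
    -- (e) an arbitrary pair
    (what : V) (qhat : Q) :
    ‖ubar - utilde‖ ^ 2 ≤
      (2 / θ ^ 2) * ‖ι (wtilde - what)‖ ^ 2 + (2 / θ ^ 2) * ‖ι (what - wT)‖ ^ 2 :=
  stmt_5_general ι A Cb B hAC Uad θ hθ f yΩ ubar utilde hubar hutilde wT ybar pbar wbar qbar hst had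
    hydiv hwdiv hvi hvitilde ytilde ptilde hsttilde hytildediv wtilde qtilde hadtilde hwtildediv
    what
end

section
/- Let V and Q be real normed spaces, H a real Hilbert space, ι : V → H a linear map with ‖ι ξ‖ ≤ C_Ω ‖ξ‖_V for all ξ ∈ V, where C_Ω > 0, and let C : V × V → ℝ, B : V × Q → ℝ be bilinear forms with C(ξ,ξ) = ‖ξ‖_V² for all ξ ∈ V. Let y_Ω ∈ H and ȳ, ȳ_T ∈ V. Suppose (w̄, q̄), (ŵ, q̂) ∈ V × Q satisfy C(w̄,ζ) + B(ζ,q̄) = ⟨ι ȳ − y_Ω, ι ζ⟩ and C(ŵ,ζ) + B(ζ,q̂) = ⟨ι ȳ_T − y_Ω, ι ζ⟩ for all ζ ∈ V, with B(w̄,φ) = B(ŵ,φ) = 0 for all φ ∈ Q. Then ‖w̄ − ŵ‖_V ≤ C_Ω ‖ι(ȳ − ȳ_T)‖ ≤ C_Ω² ‖ȳ − ȳ_T‖_V. -/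
open scoped RealInnerProductSpace

/-- Stability of the adjoint state with respect to its data: if `(w̄,q̄)` and `(ŵ,q̂)`
solve the adjoint equations with data `ȳ` and `ȳ_T` respectively, then
`‖w̄ − ŵ‖_V ≤ C_Ω ‖ι(ȳ − ȳ_T)‖ ≤ C_Ω² ‖ȳ − ȳ_T‖_V`. -/
theorem stmt_7
    {V Q H : Type*}
    [NormedAddCommGroup V] [NormedSpace ℝ V]
    [NormedAddCommGroup Q] [NormedSpace ℝ Q]
    [NormedAddCommGroup H] [InnerProductSpace ℝ H] [CompleteSpace H]
    (ι : V →ₗ[ℝ] H) (CΩ : ℝ) (hCΩ : 0 < CΩ)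
    (hι : ∀ ξ : V, ‖ι ξ‖ ≤ CΩ * ‖ξ‖)
    (Cb : V →ₗ[ℝ] V →ₗ[ℝ] ℝ) (B : V →ₗ[ℝ] Q →ₗ[ℝ] ℝ)
    (hCco : ∀ ξ : V, Cb ξ ξ = ‖ξ‖ ^ 2)
    (yΩ : H) (ybar yT : V)
    (wbar what : V) (qbar qhat : Q)
    (had : ∀ ζ : V, Cb wbar ζ + B ζ qbar = ⟪ι ybar - yΩ, ι ζ⟫)
    (hadhat : ∀ ζ : V, Cb what ζ + B ζ qhat = ⟪ι yT - yΩ, ι ζ⟫)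
    (hwdiv : ∀ φ : Q, B wbar φ = 0)
    (hwhatdiv : ∀ φ : Q, B what φ = 0) :
    ‖wbar - what‖ ≤ CΩ * ‖ι (ybar - yT)‖ ∧
      CΩ * ‖ι (ybar - yT)‖ ≤ CΩ ^ 2 * ‖ybar - yT‖ := by
  set e := wbar - what with he
  have key : ‖e‖ ^ 2 = ⟪ι (ybar - yT), ι e⟫ := by
    have h1 := had e
    have h2 := hadhat e
    have hB : B e qbar = 0 ∧ B e qhat = 0 := by
      constructor <;> simp [he, map_sub, hwdiv, hwhatdiv]
    have hC : Cb e e = Cb wbar e - Cb what e := by simp [he, map_sub]; ring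
    have : Cb wbar e - Cb what e = ⟪ι ybar - yΩ, ι e⟫ - ⟪ι yT - yΩ, ι e⟫ := by
      have h1' : Cb wbar e = ⟪ι ybar - yΩ, ι e⟫ := by
        have := had e; linarith [this, hB.1]
      have h2' : Cb what e = ⟪ι yT - yΩ, ι e⟫ := by
        have := hadhat e; linarith [this, hB.2]
      rw [h1', h2']
    rw [← hCco e, hC, this, map_sub, ← inner_sub_left]
    congr 1
    simp [map_sub]
  have h1 : ‖e‖ ≤ CΩ * ‖ι (ybar - yT)‖ := by
    rcases eq_or_ne ‖e‖ 0 with h0 | h0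
    · rw [h0]; positivity
    · have hpos : 0 < ‖e‖ := lt_of_le_of_ne (norm_nonneg _) (Ne.symm h0)
      have hcs : ⟪ι (ybar - yT), ι e⟫ ≤ ‖ι (ybar - yT)‖ * ‖ι e‖ :=
        real_inner_le_norm _ _
      have := hι e
      have : ‖e‖ ^ 2 ≤ ‖ι (ybar - yT)‖ * (CΩ * ‖e‖) := by
        calc ‖e‖ ^ 2 = ⟪ι (ybar - yT), ι e⟫ := key
          _ ≤ ‖ι (ybar - yT)‖ * ‖ι e‖ := hcs
          _ ≤ ‖ι (ybar - yT)‖ * (CΩ * ‖e‖) := by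
              exact mul_le_mul_of_nonneg_left (hι e) (norm_nonneg _)
      nlinarith [norm_nonneg (ι (ybar - yT))]
  refine ⟨h1, ?_⟩
  have := hι (ybar - yT)
  calc CΩ * ‖ι (ybar - yT)‖ ≤ CΩ * (CΩ * ‖ybar - yT‖) :=
        mul_le_mul_of_nonneg_left this hCΩ.le
    _ = CΩ ^ 2 * ‖ybar - yT‖ := by ring
end

section
/- Let V and Q be real normed spaces, H a real Hilbert space, ι : V → H a linear map with ‖ι ξ‖ ≤ C_Ω ‖ξ‖_V for all ξ ∈ V (C_Ω > 0), and let A : V × V → ℝ, B : V × Q → ℝ be bilinear forms with A(ξ,ξ) = ‖ξ‖_V² and |A(ξ,ζ)| ≤ C_ct ‖ξ‖_V ‖ζ‖_V for all ξ, ζ ∈ V (C_ct > 0), and satisfying the inf–sup condition ‖φ‖_Q ≤ C_is · sup_{ξ ∈ V, ξ ≠ 0} B(ξ,φ)/‖ξ‖_V for all φ ∈ Q (C_is > 0). Let f, ū, ū_T ∈ H and suppose (ȳ, p̄), (ŷ, p̂) ∈ V × Q satisfy A(ȳ,ξ) − B(ξ,p̄) = ⟨f + ū, ι ξ⟩ and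 A(ŷ,ξ) − B(ξ,p̂) = ⟨f + ū_T, ι ξ⟩ for all ξ ∈ V, with B(ȳ,φ) = B(ŷ,φ) = 0 for all φ ∈ Q. Then ‖p̄ − p̂‖_Q ≤ C_is C_Ω (1 + C_ct) ‖ū − ū_T‖. -/
open scoped RealInnerProductSpace

/-- Stability of the pressure with respect to the control: under coercivity and continuity
of `A` and the inf–sup condition on `B`, `‖p̄ − p̂‖_Q ≤ C_is C_Ω (1 + C_ct) ‖ū − ū_T‖`.
The inf–sup condition `‖φ‖_Q ≤ C_is · sup_{ξ ≠ 0} B(ξ,φ)/‖ξ‖_V` is encoded through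
upper bounds of the set `{B(ξ,φ)/‖ξ‖_V : ξ ≠ 0}`. -/
theorem stmt_8
    {V Q H : Type*}
    [NormedAddCommGroup V] [NormedSpace ℝ V]
    [NormedAddCommGroup Q] [NormedSpace ℝ Q]
    [NormedAddCommGroup H] [InnerProductSpace ℝ H] [CompleteSpace H]
    (ι : V →ₗ[ℝ] H) (CΩ : ℝ) (hCΩ : 0 < CΩ)
    (hι : ∀ ξ : V, ‖ι ξ‖ ≤ CΩ * ‖ξ‖)
    (A : V →ₗ[ℝ] V →ₗ[ℝ] ℝ) (B : V →ₗ[ℝ] Q →ₗ[ℝ] ℝ)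
    (hAco : ∀ ξ : V, A ξ ξ = ‖ξ‖ ^ 2)
    (Cct : ℝ) (hCct : 0 < Cct)
    (hAct : ∀ ξ ζ : V, |A ξ ζ| ≤ Cct * ‖ξ‖ * ‖ζ‖)
    (Cis : ℝ) (hCis : 0 < Cis)
    (hinfsup : ∀ φ : Q, ∀ c : ℝ, (∀ ξ : V, B ξ φ ≤ c * ‖ξ‖) → ‖φ‖ ≤ Cis * c)
    (f ubar uT : H)
    (ybar yhat : V) (pbar phat : Q)
    (hst : ∀ ξ : V, A ybar ξ - B ξ pbar = ⟪f + ubar, ι ξ⟫)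
    (hsthat : ∀ ξ : V, A yhat ξ - B ξ phat = ⟪f + uT, ι ξ⟫)
    (hydiv : ∀ φ : Q, B ybar φ = 0)
    (hyhatdiv : ∀ φ : Q, B yhat φ = 0) :
    ‖pbar - phat‖ ≤ Cis * CΩ * (1 + Cct) * ‖ubar - uT‖ := by
  set e := ybar - yhat with he
  -- difference equation
  have hdiff : ∀ ξ : V, A e ξ - B ξ (pbar - phat) = ⟪ubar - uT, ι ξ⟫ := by
    intro ξ
    have h1 := hst ξ
    have h2 := hsthat ξ
    have : (A ybar ξ - B ξ pbar) - (A yhat ξ - B ξ phat)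
        = ⟪f + ubar, ι ξ⟫ - ⟪f + uT, ι ξ⟫ := by rw [h1, h2]
    simp only [he, inner_add_left, inner_sub_left, map_sub, LinearMap.sub_apply] at this ⊢
    linarith
  -- velocity bound
  have hBe : ∀ φ : Q, B e φ = 0 := by
    intro φ; simp [he, map_sub, LinearMap.sub_apply, hydiv, hyhatdiv]
  have hun : (0:ℝ) ≤ ‖ubar - uT‖ := norm_nonneg _
  have he2 : ‖e‖ ^ 2 = ⟪ubar - uT, ι e⟫ := by
    have := hdiff e
    rw [hBe (pbar - phat)] at this
    simpa [hAco e] using this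
  have hebound : ‖e‖ ≤ CΩ * ‖ubar - uT‖ := by
    rcases eq_or_ne (‖e‖) 0 with h0 | h0
    · rw [h0]; positivity
    · have hpos : 0 < ‖e‖ := lt_of_le_of_ne (norm_nonneg _) (Ne.symm h0)
      have h1 : ‖e‖ ^ 2 ≤ ‖ubar - uT‖ * (CΩ * ‖e‖) := by
        rw [he2]
        calc ⟪ubar - uT, ι e⟫ ≤ ‖ubar - uT‖ * ‖ι e‖ := real_inner_le_norm _ _
          _ ≤ ‖ubar - uT‖ * (CΩ * ‖e‖) := by
              exact mul_le_mul_of_nonneg_left (hι e) hun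
      nlinarith
  -- inf-sup
  have key : ∀ ξ : V, B ξ (pbar - phat) ≤ (CΩ * (1 + Cct) * ‖ubar - uT‖) * ‖ξ‖ := by
    intro ξ
    have heq : B ξ (pbar - phat) = A e ξ - ⟪ubar - uT, ι ξ⟫ := by
      have := hdiff ξ; linarith
    have hA : A e ξ ≤ Cct * (CΩ * ‖ubar - uT‖) * ‖ξ‖ := by
      have := (abs_le.mp (hAct e ξ)).2
      have h2 : Cct * ‖e‖ * ‖ξ‖ ≤ Cct * (CΩ * ‖ubar - uT‖) * ‖ξ‖ := by
        have := mul_le_mul_of_nonneg_left hebound hCct.le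
        nlinarith [norm_nonneg ξ]
      linarith
    have hI : -⟪ubar - uT, ι ξ⟫ ≤ CΩ * ‖ubar - uT‖ * ‖ξ‖ := by
      have h1 : |⟪ubar - uT, ι ξ⟫| ≤ ‖ubar - uT‖ * ‖ι ξ‖ := abs_real_inner_le_norm _ _
      have h2 : ‖ubar - uT‖ * ‖ι ξ‖ ≤ ‖ubar - uT‖ * (CΩ * ‖ξ‖) :=
        mul_le_mul_of_nonneg_left (hι ξ) hun
      have := (abs_le.mp h1).1
      nlinarith
    rw [heq]; nlinarith
  have := hinfsup (pbar - phat) _ key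
  calc ‖pbar - phat‖ ≤ Cis * (CΩ * (1 + Cct) * ‖ubar - uT‖) := this
    _ = Cis * CΩ * (1 + Cct) * ‖ubar - uT‖ := by ring
end

section
/- Let V and Q be real normed spaces, H a real Hilbert space, ι : V → H a linear map with ‖ι ξ‖ ≤ C_Ω ‖ξ‖_V for all ξ ∈ V (C_Ω > 0), and let C : V × V → ℝ, B : V × Q → ℝ be bilinear forms with C(ξ,ξ) = ‖ξ‖_V² and |C(ξ,ζ)| ≤ C_ct ‖ξ‖_V ‖ζ‖_V for all ξ, ζ ∈ V (C_ct > 0), and satisfying the inf–sup condition ‖φ‖_Q ≤ C_is · sup_{ξ ∈ V, ξ ≠ 0} B(ξ,φ)/‖ξ‖_V for all φ ∈ Q (C_is > 0). Let y_Ω ∈ H, ȳ, ȳ_T ∈ V, and suppose (w̄, q̄), (ŵ, q̂) ∈ V × Q satisfy C(w̄,ζ) + B(ζ,q̄) = ⟨ι ȳ − y_Ω, ι ζ⟩ and C(ŵ,ζ) + B(ζ,q̂) = ⟨ι ȳ_T − y_Ω, ι ζ⟩ for all ζ ∈ V, with B(w̄,φ) = B(ŵ,φ) = 0 for all φ ∈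 Q. Then ‖q̄ − q̂‖_Q ≤ C_is C_Ω² (1 + C_ct) ‖ȳ − ȳ_T‖_V. -/
open scoped RealInnerProductSpace

/-- Stability of the adjoint pressure with respect to the data: under coercivity and
continuity of `C` and the inf–sup condition on `B`,
`‖q̄ − q̂‖_Q ≤ C_is C_Ω² (1 + C_ct) ‖ȳ − ȳ_T‖_V`. The inf–sup condition
`‖φ‖_Q ≤ C_is · sup_{ξ ≠ 0} B(ξ,φ)/‖ξ‖_V` is encoded through upper bounds of the set
`{B(ξ,φ)/‖ξ‖_V : ξ ≠ 0}`. -/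
theorem stmt_9
    {V Q H : Type*}
    [NormedAddCommGroup V] [NormedSpace ℝ V]
    [NormedAddCommGroup Q] [NormedSpace ℝ Q]
    [NormedAddCommGroup H] [InnerProductSpace ℝ H] [CompleteSpace H]
    (ι : V →ₗ[ℝ] H) (CΩ : ℝ) (hCΩ : 0 < CΩ)
    (hι : ∀ ξ : V, ‖ι ξ‖ ≤ CΩ * ‖ξ‖)
    (Cb : V →ₗ[ℝ] V →ₗ[ℝ] ℝ) (B : V →ₗ[ℝ] Q →ₗ[ℝ] ℝ)
    (hCco : ∀ ξ : V, Cb ξ ξ = ‖ξ‖ ^ 2)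
    (Cct : ℝ) (hCct : 0 < Cct)
    (hCcont : ∀ ξ ζ : V, |Cb ξ ζ| ≤ Cct * ‖ξ‖ * ‖ζ‖)
    (Cis : ℝ) (hCis : 0 < Cis)
    (hinfsup : ∀ φ : Q, ∀ c : ℝ, (∀ ξ : V, B ξ φ ≤ c * ‖ξ‖) → ‖φ‖ ≤ Cis * c)
    (yΩ : H) (ybar yT : V)
    (wbar what : V) (qbar qhat : Q)
    (had : ∀ ζ : V, Cb wbar ζ + B ζ qbar = ⟪ι ybar - yΩ, ι ζ⟫)
    (hadhat : ∀ ζ : V, Cb what ζ + B ζ qhat = ⟪ι yT - yΩ, ι ζ⟫)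
    (hwdiv : ∀ φ : Q, B wbar φ = 0)
    (hwhatdiv : ∀ φ : Q, B what φ = 0) :
    ‖qbar - qhat‖ ≤ Cis * CΩ ^ 2 * (1 + Cct) * ‖ybar - yT‖ := by

  -- difference equation
  set e := wbar - what with he
  have hdiff : ∀ ζ : V, Cb e ζ + B ζ (qbar - qhat) = ⟪ι (ybar - yT), ι ζ⟫ := by
    intro ζ
    have h1 := had ζ
    have h2 := hadhat ζ
    have : Cb e ζ + B ζ (qbar - qhat)
        = (Cb wbar ζ + B ζ qbar) - (Cb what ζ + B ζ qhat) := by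
      simp [he, map_sub]; ring
    rw [this, h1, h2, ← inner_sub_left]
    congr 1
    simp [map_sub]
  -- bound on ‖e‖
  have hB0 : ∀ φ : Q, B e φ = 0 := by
    intro φ; simp [he, map_sub, hwdiv, hwhatdiv]
  have hinner : ∀ ζ : V, ⟪ι (ybar - yT), ι ζ⟫ ≤ CΩ ^ 2 * ‖ybar - yT‖ * ‖ζ‖ := by
    intro ζ
    calc ⟪ι (ybar - yT), ι ζ⟫ ≤ ‖ι (ybar - yT)‖ * ‖ι ζ‖ := real_inner_le_norm _ _
      _ ≤ (CΩ * ‖ybar - yT‖) * (CΩ * ‖ζ‖) := by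
          apply mul_le_mul (hι _) (hι _) (norm_nonneg _)
          positivity
      _ = CΩ ^ 2 * ‖ybar - yT‖ * ‖ζ‖ := by ring
  have he_bound : ‖e‖ ≤ CΩ ^ 2 * ‖ybar - yT‖ := by
    have h := hdiff e
    rw [hB0, add_zero, hCco] at h
    rcases eq_or_lt_of_le (norm_nonneg e) with h0 | h0
    · rw [← h0]; positivity
    · have hsq : ‖e‖ ^ 2 ≤ CΩ ^ 2 * ‖ybar - yT‖ * ‖e‖ := h.trans_le (hinner e)
      nlinarith
  -- apply inf-sup
  have key : ∀ ζ : V, B ζ (qbar - qhat) ≤ (CΩ ^ 2 * (1 + Cct) * ‖ybar - yT‖) * ‖ζ‖ := by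
    intro ζ
    have h := hdiff ζ
    have hBq : B ζ (qbar - qhat) = ⟪ι (ybar - yT), ι ζ⟫ - Cb e ζ := by linarith
    have hC : -Cb e ζ ≤ Cct * ‖e‖ * ‖ζ‖ := by
      have := hCcont e ζ
      have := neg_abs_le (Cb e ζ)
      linarith
    have hC2 : Cct * ‖e‖ * ‖ζ‖ ≤ Cct * (CΩ ^ 2 * ‖ybar - yT‖) * ‖ζ‖ := by
      have := mul_le_mul_of_nonneg_left he_bound (le_of_lt hCct)
      exact mul_le_mul_of_nonneg_right this (norm_nonneg _)
    have := hinner ζ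
    rw [hBq]
    nlinarith [norm_nonneg ζ, norm_nonneg (ybar - yT)]
  have := hinfsup (qbar - qhat) _ key
  calc ‖qbar - qhat‖ ≤ Cis * (CΩ ^ 2 * (1 + Cct) * ‖ybar - yT‖) := this
    _ = Cis * CΩ ^ 2 * (1 + Cct) * ‖ybar - yT‖ := by ring
end

section
/- In the abstract optimal-control framework, assume: the continuous optimality system holds for (ȳ, p̄, w̄, q̄, ū); (ȳ_T, p̄_T, w̄_T, q̄_T, ū_T) ∈ V × Q × V × Q × U_ad is arbitrary; the auxiliary solutions (ŷ, p̂), (ŵ, q̂), ũ, (ỹ, p̃), (w̃, q̃) exist as described; and η_y ≥ ‖ŷ − ȳ_T‖_V, η_w ≥ ‖ŵ − w̄_T‖_V, η_u = ‖ũ − ū_T‖. Then, with μ := 4/θ², ‖ū − ū_T‖² ≤ 2 μ C_Ω⁶ η_y² + μ C_Ω² η_w² + (2 + 2 μ C_Ω⁸) η_u². -/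
open scoped RealInnerProductSpace


private lemma sq_cancel_aux {x c : ℝ} (hc : 0 ≤ c) (hx : 0 ≤ x) (h : x ^ 2 ≤ c * x) : x ≤ c := by
  rcases hx.eq_or_lt with h0 | h0
  · linarith
  · exact le_of_mul_le_mul_right (by nlinarith : x * x ≤ c * x) h0

set_option maxHeartbeats 1000000 in
/-- Step 1 of the global reliability analysis: the control error bound
`‖ū − ū_T‖² ≤ 2μC_Ω⁶ η_y² + μC_Ω² η_w² + (2 + 2μC_Ω⁸) η_u²` with `μ = 4/θ²`. -/
theorem stmt_10
    {V Q H : Type*}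
    [NormedAddCommGroup V] [InnerProductSpace ℝ V] [CompleteSpace V]
    [NormedAddCommGroup Q] [InnerProductSpace ℝ Q] [CompleteSpace Q]
    [NormedAddCommGroup H] [InnerProductSpace ℝ H] [CompleteSpace H]
    (ι : V →ₗ[ℝ] H) (CΩ : ℝ) (hCΩ : 0 < CΩ)
    (hι : ∀ ξ : V, ‖ι ξ‖ ≤ CΩ * ‖ξ‖)
    (A Cb : V →ₗ[ℝ] V →ₗ[ℝ] ℝ) (B : V →ₗ[ℝ] Q →ₗ[ℝ] ℝ)
    (hAC : ∀ ξ ζ : V, A ξ ζ = Cb ζ ξ)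
    (hAco : ∀ ξ : V, A ξ ξ = ‖ξ‖ ^ 2)
    (Cct : ℝ) (hCct : 0 < Cct)
    (hAct : ∀ ξ ζ : V, |A ξ ζ| ≤ Cct * ‖ξ‖ * ‖ζ‖)
    (Uad : Set H) (hUne : Uad.Nonempty) (hUconv : Convex ℝ Uad)
    (θ : ℝ) (hθ : 0 < θ) (f yΩ : H)
    -- the continuous optimality system
    (ybar : V) (pbar : Q) (wbar : V) (qbar : Q) (ubar : H) (hubar : ubar ∈ Uad)
    (hst : ∀ ξ : V, A ybar ξ - B ξ pbar = ⟪f + ubar, ι ξ⟫)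
    (hydiv : ∀ φ : Q, B ybar φ = 0)
    (had : ∀ ζ : V, Cb wbar ζ + B ζ qbar = ⟪ι ybar - yΩ, ι ζ⟫)
    (hwdiv : ∀ φ : Q, B wbar φ = 0)
    (hvi : ∀ u ∈ Uad, 0 ≤ ⟪ι wbar + θ • ubar, u - ubar⟫)
    -- the (arbitrary) discrete approximation
    (yT : V) (pT : Q) (wT : V) (qT : Q) (uT : H) (huT : uT ∈ Uad)
    -- auxiliary solution (ŷ, p̂)
    (yhat : V) (phat : Q)
    (hsthat : ∀ ξ : V, A yhat ξ - B ξ phat = ⟪f + uT, ι ξ⟫)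
    (hyhatdiv : ∀ φ : Q, B yhat φ = 0)
    -- auxiliary solution (ŵ, q̂)
    (what : V) (qhat : Q)
    (hadhat : ∀ ζ : V, Cb what ζ + B ζ qhat = ⟪ι yT - yΩ, ι ζ⟫)
    (hwhatdiv : ∀ φ : Q, B what φ = 0)
    -- auxiliary control ũ
    (utilde : H) (hutilde : utilde ∈ Uad)
    (hvitilde : ∀ u ∈ Uad, 0 ≤ ⟪ι wT + θ • utilde, u - utilde⟫)
    -- auxiliary solution (ỹ, p̃)
    (ytilde : V) (ptilde : Q)
    (hsttilde : ∀ ξ : V, A ytilde ξ - B ξ ptilde = ⟪f + utilde, ι ξ⟫)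
    (hytildediv : ∀ φ : Q, B ytilde φ = 0)
    -- auxiliary solution (w̃, q̃)
    (wtilde : V) (qtilde : Q)
    (hadtilde : ∀ ζ : V, Cb wtilde ζ + B ζ qtilde = ⟪ι ytilde - yΩ, ι ζ⟫)
    (hwtildediv : ∀ φ : Q, B wtilde φ = 0)
    -- error estimators
    (ηy ηw ηu : ℝ)
    (hηy : ‖yhat - yT‖ ≤ ηy) (hηw : ‖what - wT‖ ≤ ηw)
    (hηu : ηu = ‖utilde - uT‖)
    (μ : ℝ) (hμ : μ = 4 / θ ^ 2) :
    ‖ubar - uT‖ ^ 2 ≤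
      2 * μ * CΩ ^ 6 * ηy ^ 2 + μ * CΩ ^ 2 * ηw ^ 2 + (2 + 2 * μ * CΩ ^ 8) * ηu ^ 2 := by
  have hηu0 : 0 ≤ ηu := hηu ▸ norm_nonneg _
  have hηy0 : 0 ≤ ηy := le_trans (norm_nonneg _) hηy
  have hηw0 : 0 ≤ ηw := le_trans (norm_nonneg _) hηw
  -- Step B : sign condition
  have e1 : A (ybar - ytilde) (wbar - wtilde) = ⟪ubar - utilde, ι (wbar - wtilde)⟫ := by
    have h1 := hst (wbar - wtilde)
    have h2 := hsttilde (wbar - wtilde)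
    simp only [map_sub, LinearMap.sub_apply, hwdiv, hwtildediv, inner_add_left,
      inner_sub_left, inner_sub_right, sub_zero, sub_self] at h1 h2 ⊢
    linarith
  have e2 : A (ybar - ytilde) (wbar - wtilde) = ‖ι ybar - ι ytilde‖ ^ 2 := by
    have h1 := had (ybar - ytilde)
    have h2 := hadtilde (ybar - ytilde)
    rw [hAC, ← real_inner_self_eq_norm_sq]
    simp only [map_sub, LinearMap.sub_apply, hydiv, hytildediv, inner_sub_left,
      inner_sub_right, sub_zero, sub_self] at h1 h2 ⊢
    linarith
  have hBle : ⟪ι wbar - ι wtilde, utilde - ubar⟫ ≤ 0 := by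
    have h3 : ⟪ubar - utilde, ι wbar - ι wtilde⟫ = ‖ι ybar - ι ytilde‖ ^ 2 := by
      rw [← map_sub, ← e1, e2]
    have h4 : ⟪ι wbar - ι wtilde, utilde - ubar⟫
        = -⟪ubar - utilde, ι wbar - ι wtilde⟫ := by
      rw [real_inner_comm, show utilde - ubar = -(ubar - utilde) by abel, inner_neg_left]
    rw [h4, h3]
    nlinarith [sq_nonneg ‖ι ybar - ι ytilde‖]
  -- Step C : ‖ytilde - yhat‖ ≤ CΩ * ηu
  have hC1 : ‖ytilde - yhat‖ ^ 2 = ⟪utilde - uT, ι (ytilde - yhat)⟫ := by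
    have h1 := hsttilde (ytilde - yhat)
    have h2 := hsthat (ytilde - yhat)
    rw [← hAco]
    simp only [map_sub, LinearMap.sub_apply, hytildediv, hyhatdiv, inner_add_left,
      inner_sub_left, inner_sub_right, sub_zero, sub_self] at h1 h2 ⊢
    linarith
  have hyd : ‖ytilde - yhat‖ ≤ CΩ * ηu := by
    apply sq_cancel_aux (by positivity) (norm_nonneg _)
    rw [hC1]
    calc ⟪utilde - uT, ι (ytilde - yhat)⟫ ≤ ‖utilde - uT‖ * ‖ι (ytilde - yhat)‖ :=
          real_inner_le_norm _ _
      _ ≤ ηu * (CΩ * ‖ytilde - yhat‖) := by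
          apply mul_le_mul (le_of_eq hηu.symm) (hι _) (norm_nonneg _) hηu0
      _ = CΩ * ηu * ‖ytilde - yhat‖ := by ring
  -- Step D : ‖wtilde - what‖ ≤ CΩ^2 * (CΩ * ηu + ηy)
  have hD1 : ‖wtilde - what‖ ^ 2 = ⟪ι ytilde - ι yT, ι (wtilde - what)⟫ := by
    have h1 := hadtilde (wtilde - what)
    have h2 := hadhat (wtilde - what)
    rw [show (‖wtilde - what‖ : ℝ) ^ 2 = Cb (wtilde - what) (wtilde - what) from
      ((hAco _).symm.trans (hAC _ _))]
    simp only [map_sub, LinearMap.sub_apply, hwtildediv, hwhatdiv, inner_sub_left,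
      inner_sub_right, sub_zero, sub_self] at h1 h2 ⊢
    linarith
  have hyT : ‖ytilde - yT‖ ≤ CΩ * ηu + ηy := by
    calc ‖ytilde - yT‖ ≤ ‖ytilde - yhat‖ + ‖yhat - yT‖ := by
          simpa using norm_sub_le_norm_sub_add_norm_sub ytilde yhat yT
      _ ≤ CΩ * ηu + ηy := add_le_add hyd hηy
  have hwd : ‖wtilde - what‖ ≤ CΩ ^ 2 * (CΩ * ηu + ηy) := by
    apply sq_cancel_aux (by positivity) (norm_nonneg _)
    rw [hD1]
    calc ⟪ι ytilde - ι yT, ι (wtilde - what)⟫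
        ≤ ‖ι ytilde - ι yT‖ * ‖ι (wtilde - what)‖ := real_inner_le_norm _ _
      _ = ‖ι (ytilde - yT)‖ * ‖ι (wtilde - what)‖ := by rw [map_sub ι ytilde yT]
      _ ≤ (CΩ * ‖ytilde - yT‖) * (CΩ * ‖wtilde - what‖) :=
          mul_le_mul (hι _) (hι _) (norm_nonneg _) (by positivity)
      _ ≤ (CΩ * (CΩ * ηu + ηy)) * (CΩ * ‖wtilde - what‖) := by
          have : CΩ * ‖ytilde - yT‖ ≤ CΩ * (CΩ * ηu + ηy) :=
            mul_le_mul_of_nonneg_left hyT hCΩ.le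
          apply mul_le_mul_of_nonneg_right this (by positivity)
      _ = CΩ ^ 2 * (CΩ * ηu + ηy) * ‖wtilde - what‖ := by ring
  -- Step A : variational inequality comparison
  have hA1 : θ * ‖ubar - utilde‖ ^ 2 ≤ ⟪ι wbar - ι wT, utilde - ubar⟫ := by
    have h1 := hvi utilde hutilde
    have h2 := hvitilde ubar hubar
    rw [← real_inner_self_eq_norm_sq]
    have hcomm : θ * ⟪utilde, ubar⟫ = θ * ⟪ubar, utilde⟫ := by rw [real_inner_comm]
    simp only [inner_add_left, inner_sub_left, inner_sub_right, real_inner_smul_left,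
      mul_sub] at h1 h2 ⊢
    linarith
  have hsplit : ⟪ι wbar - ι wT, utilde - ubar⟫ = ⟪ι wbar - ι wtilde, utilde - ubar⟫
      + ⟪ι wtilde - ι what, utilde - ubar⟫ + ⟪ι what - ι wT, utilde - ubar⟫ := by
    simp only [inner_sub_left]
    ring
  -- bound the two remaining inner products
  have ht2 : ⟪ι wtilde - ι what, utilde - ubar⟫
      ≤ CΩ ^ 3 * (CΩ * ηu + ηy) * ‖ubar - utilde‖ := by
    calc ⟪ι wtilde - ι what, utilde - ubar⟫
        ≤ ‖ι wtilde - ι what‖ * ‖utilde - ubar‖ := real_inner_le_norm _ _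
      _ = ‖ι (wtilde - what)‖ * ‖ubar - utilde‖ := by rw [map_sub ι wtilde what, norm_sub_rev utilde ubar]
      _ ≤ (CΩ * (CΩ ^ 2 * (CΩ * ηu + ηy))) * ‖ubar - utilde‖ := by
          apply mul_le_mul_of_nonneg_right _ (norm_nonneg _)
          calc ‖ι (wtilde - what)‖ ≤ CΩ * ‖wtilde - what‖ := hι _
            _ ≤ CΩ * (CΩ ^ 2 * (CΩ * ηu + ηy)) := mul_le_mul_of_nonneg_left hwd hCΩ.le
      _ = CΩ ^ 3 * (CΩ * ηu + ηy) * ‖ubar - utilde‖ := by ring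
  have ht3 : ⟪ι what - ι wT, utilde - ubar⟫ ≤ CΩ * ηw * ‖ubar - utilde‖ := by
    calc ⟪ι what - ι wT, utilde - ubar⟫
        ≤ ‖ι what - ι wT‖ * ‖utilde - ubar‖ := real_inner_le_norm _ _
      _ = ‖ι (what - wT)‖ * ‖ubar - utilde‖ := by rw [map_sub ι what wT, norm_sub_rev utilde ubar]
      _ ≤ (CΩ * ηw) * ‖ubar - utilde‖ := by
          apply mul_le_mul_of_nonneg_right _ (norm_nonneg _)
          calc ‖ι (what - wT)‖ ≤ CΩ * ‖what - wT‖ := hι _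
            _ ≤ CΩ * ηw := mul_le_mul_of_nonneg_left hηw hCΩ.le
      _ = CΩ * ηw * ‖ubar - utilde‖ := by ring
  -- combine: θ ‖ubar - utilde‖ ≤ K
  set K : ℝ := CΩ ^ 3 * ηy + CΩ ^ 4 * ηu + CΩ * ηw with hK
  have hK0 : 0 ≤ K := by positivity
  have hKe : ‖ubar - utilde‖ ≤ K / θ := by
    apply sq_cancel_aux (by positivity) (norm_nonneg _)
    have h5 : θ * ‖ubar - utilde‖ ^ 2 ≤ K * ‖ubar - utilde‖ := by
      have h6 := hA1
      rw [hsplit] at h6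
      rw [hK]
      nlinarith [hBle, ht2, ht3]
    rw [div_mul_eq_mul_div, le_div_iff₀ hθ]
    linarith [h5]
  have htri : ‖ubar - uT‖ ≤ ‖ubar - utilde‖ + ηu := by
    rw [hηu]
    simpa using norm_sub_le_norm_sub_add_norm_sub ubar utilde uT
  have hμ0 : 0 ≤ μ := by rw [hμ]; positivity
  have hfin : ‖ubar - uT‖ ^ 2 ≤ 2 * (K / θ) ^ 2 + 2 * ηu ^ 2 := by
    have h6 : ‖ubar - uT‖ ^ 2 ≤ (‖ubar - utilde‖ + ηu) ^ 2 :=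
      pow_le_pow_left₀ (norm_nonneg _) htri 2
    have h7 : ‖ubar - utilde‖ ^ 2 ≤ (K / θ) ^ 2 :=
      pow_le_pow_left₀ (norm_nonneg _) hKe 2
    linarith [sq_nonneg (‖ubar - utilde‖ - ηu)]
  have hKsq : (K / θ) ^ 2 = μ / 4 * K ^ 2 := by
    rw [div_pow, hμ]; field_simp
  rw [hKsq] at hfin
  have hKbound : K ^ 2 ≤ 4 * (CΩ ^ 3 * ηy) ^ 2 + 2 * (CΩ * ηw) ^ 2 + 4 * (CΩ ^ 4 * ηu) ^ 2 := by
    rw [hK]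
    nlinarith [sq_nonneg (2 * (CΩ ^ 3 * ηy) - CΩ * ηw), sq_nonneg (2 * (CΩ ^ 4 * ηu) - CΩ * ηw),
      sq_nonneg (CΩ ^ 3 * ηy - CΩ ^ 4 * ηu)]
  have hstep : μ / 2 * K ^ 2 ≤
      2 * μ * CΩ ^ 6 * ηy ^ 2 + μ * CΩ ^ 2 * ηw ^ 2 + 2 * μ * CΩ ^ 8 * ηu ^ 2 := by
    calc μ / 2 * K ^ 2
        ≤ μ / 2 * (4 * (CΩ ^ 3 * ηy) ^ 2 + 2 * (CΩ * ηw) ^ 2 + 4 * (CΩ ^ 4 * ηu) ^ 2) :=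
          mul_le_mul_of_nonneg_left hKbound (by positivity)
      _ = 2 * μ * CΩ ^ 6 * ηy ^ 2 + μ * CΩ ^ 2 * ηw ^ 2 + 2 * μ * CΩ ^ 8 * ηu ^ 2 := by ring
  linarith [hfin, hstep]
end

section
/- In the abstract optimal-control framework, assume the continuous optimality system holds for (ȳ, p̄, w̄, q̄, ū), the auxiliary solutions (ŷ, p̂), (ŵ, q̂), ũ, (ỹ, p̃), (w̃, q̃) exist, and η_y ≥ ‖ŷ − ȳ_T‖_V, η_w ≥ ‖ŵ − w̄_T‖_V, η_u = ‖ũ − ū_T‖. Then, with μ := 4/θ², ‖ȳ − ȳ_T‖_V² ≤ 2(2 μ C_Ω⁸ + 1) η_y² + 2 μ C_Ω⁴ η_w² + 2 C_Ω² (2 + 2 μ C_Ω⁸) η_u². -/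
/-!
Since `A` is coercive with constant one and `ι` is bounded by `C_Ω`, the control-to-state map is
`C_Ω`-Lipschitz and the state-to-adjoint map is `C_Ω²`-Lipschitz. Comparing `ȳ_T` with `ȳ` through
`ŷ`, the state error is controlled by `η_y`, `C_Ω η_u` and `C_Ω ‖ū − ũ‖`. The two variational
inequalities for `ū` and `ũ` give `θ ‖ū − ũ‖² ≤ ⟪ι w_T − ι w̄, ū − ũ⟫`; splitting
`ι w_T − ι w̄ = (ι w_T − ι w̃) + (ι w̃ − ι w̄)`, the second part contributes a nonpositive term
because `A(ξ, ζ) = C(ζ, ξ)` makes `⟪ū − ũ, ι (w̄ − w̃)⟫ = ‖ι (ȳ − ỹ)‖²`, and the first is bounded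
through `w̃ → ŵ → w_T` by the estimators. Squaring with `(x + y + z)² ≤ 4x² + 4y² + 2z²` gives
the constants.
-/

open scoped RealInnerProductSpace

section OptimalitySystem

variable {V Q H : Type*} [NormedAddCommGroup V] [Module ℝ V] [AddCommGroup Q] [Module ℝ Q]
  [NormedAddCommGroup H] [InnerProductSpace ℝ H]

/-- The constraint `B(y, ·) = 0` is encoded as `y ∈ ker B`. -/
def IsStateSolution (A : V →ₗ[ℝ] V →ₗ[ℝ] ℝ) (B : V →ₗ[ℝ] Q →ₗ[ℝ] ℝ) (ι : V →ₗ[ℝ] H)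
    (f u : H) (y : V) (p : Q) : Prop :=
  (∀ ξ : V, A y ξ - B ξ p = ⟪f + u, ι ξ⟫) ∧ y ∈ LinearMap.ker B

def IsAdjointSolution (Cb : V →ₗ[ℝ] V →ₗ[ℝ] ℝ) (B : V →ₗ[ℝ] Q →ₗ[ℝ] ℝ) (ι : V →ₗ[ℝ] H)
    (yΩ : H) (y w : V) (q : Q) : Prop :=
  (∀ ζ : V, Cb w ζ + B ζ q = ⟪ι y - yΩ, ι ζ⟫) ∧ w ∈ LinearMap.ker B

variable {A Cb : V →ₗ[ℝ] V →ₗ[ℝ] ℝ} {B : V →ₗ[ℝ] Q →ₗ[ℝ] ℝ} {ι : V →ₗ[ℝ] H} {CΩ : ℝ}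

lemma IsStateSolution.apply_sub {f u₁ u₂ : H} {y₁ y₂ : V} {p₁ p₂ : Q}
    (h₁ : IsStateSolution A B ι f u₁ y₁ p₁) (h₂ : IsStateSolution A B ι f u₂ y₂ p₂)
    {ξ : V} (hξ : ξ ∈ LinearMap.ker B) :
    A (y₁ - y₂) ξ = ⟪u₁ - u₂, ι ξ⟫ := by
  have hξ' : ∀ φ, B ξ φ = 0 := fun φ => LinearMap.congr_fun (LinearMap.mem_ker.1 hξ) φ
  have e₁ := h₁.1 ξ
  have e₂ := h₂.1 ξ
  rw [hξ'] at e₁ e₂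
  rw [map_sub, LinearMap.sub_apply, inner_sub_left]
  simp only [inner_add_left] at e₁ e₂
  linarith

lemma IsAdjointSolution.apply_sub {yΩ : H} {y₁ y₂ w₁ w₂ : V} {q₁ q₂ : Q}
    (h₁ : IsAdjointSolution Cb B ι yΩ y₁ w₁ q₁) (h₂ : IsAdjointSolution Cb B ι yΩ y₂ w₂ q₂)
    {ζ : V} (hζ : ζ ∈ LinearMap.ker B) :
    Cb (w₁ - w₂) ζ = ⟪ι (y₁ - y₂), ι ζ⟫ := by
  have hζ' : ∀ φ, B ζ φ = 0 := fun φ => LinearMap.congr_fun (LinearMap.mem_ker.1 hζ) φ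
  have e₁ := h₁.1 ζ
  have e₂ := h₂.1 ζ
  rw [hζ'] at e₁ e₂
  rw [map_sub, map_sub, LinearMap.sub_apply, inner_sub_left]
  simp only [inner_sub_left] at e₁ e₂
  linarith

lemma norm_le_mul_of_inner_eq_norm_sq (hCΩ : 0 ≤ CΩ) (hι : ∀ ξ : V, ‖ι ξ‖ ≤ CΩ * ‖ξ‖)
    {d : V} {g : H} (h : ⟪g, ι d⟫ = ‖d‖ ^ 2) : ‖d‖ ≤ CΩ * ‖g‖ := by
  have hsq : ‖d‖ * ‖d‖ ≤ (CΩ * ‖g‖) * ‖d‖ :=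
    calc ‖d‖ * ‖d‖ = ⟪g, ι d⟫ := by rw [h, sq]
      _ ≤ ‖g‖ * ‖ι d‖ := real_inner_le_norm g (ι d)
      _ ≤ ‖g‖ * (CΩ * ‖d‖) := mul_le_mul_of_nonneg_left (hι d) (norm_nonneg g)
      _ = (CΩ * ‖g‖) * ‖d‖ := by ring
  rcases (norm_nonneg d).eq_or_lt with hd | hd
  · rw [← hd]; positivity
  · exact le_of_mul_le_mul_right hsq hd

lemma IsStateSolution.norm_sub_le (hAco : ∀ ξ : V, A ξ ξ = ‖ξ‖ ^ 2) (hCΩ : 0 ≤ CΩ)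
    (hι : ∀ ξ : V, ‖ι ξ‖ ≤ CΩ * ‖ξ‖) {f u₁ u₂ : H} {y₁ y₂ : V} {p₁ p₂ : Q}
    (h₁ : IsStateSolution A B ι f u₁ y₁ p₁) (h₂ : IsStateSolution A B ι f u₂ y₂ p₂) :
    ‖y₁ - y₂‖ ≤ CΩ * ‖u₁ - u₂‖ :=
  norm_le_mul_of_inner_eq_norm_sq hCΩ hι <| by
    rw [← h₁.apply_sub h₂ (Submodule.sub_mem _ h₁.2 h₂.2), hAco]

lemma IsAdjointSolution.norm_sub_le (hAC : ∀ ξ ζ : V, A ξ ζ = Cb ζ ξ)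
    (hAco : ∀ ξ : V, A ξ ξ = ‖ξ‖ ^ 2) (hCΩ : 0 ≤ CΩ) (hι : ∀ ξ : V, ‖ι ξ‖ ≤ CΩ * ‖ξ‖)
    {yΩ : H} {y₁ y₂ w₁ w₂ : V} {q₁ q₂ : Q}
    (h₁ : IsAdjointSolution Cb B ι yΩ y₁ w₁ q₁) (h₂ : IsAdjointSolution Cb B ι yΩ y₂ w₂ q₂) :
    ‖w₁ - w₂‖ ≤ CΩ ^ 2 * ‖y₁ - y₂‖ :=
  calc ‖w₁ - w₂‖ ≤ CΩ * ‖ι (y₁ - y₂)‖ := norm_le_mul_of_inner_eq_norm_sq hCΩ hι <| by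
        rw [← h₁.apply_sub h₂ (Submodule.sub_mem _ h₁.2 h₂.2), ← hAC, hAco]
    _ ≤ CΩ * (CΩ * ‖y₁ - y₂‖) := mul_le_mul_of_nonneg_left (hι _) hCΩ
    _ = CΩ ^ 2 * ‖y₁ - y₂‖ := by ring

/-- Monotonicity of the control-to-adjoint map. -/
lemma IsStateSolution.inner_sub_adjoint_nonneg (hAC : ∀ ξ ζ : V, A ξ ζ = Cb ζ ξ)
    {f yΩ u₁ u₂ : H} {y₁ y₂ w₁ w₂ : V} {p₁ p₂ q₁ q₂ : Q}
    (h₁ : IsStateSolution A B ι f u₁ y₁ p₁) (h₂ : IsStateSolution A B ι f u₂ y₂ p₂)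
    (k₁ : IsAdjointSolution Cb B ι yΩ y₁ w₁ q₁) (k₂ : IsAdjointSolution Cb B ι yΩ y₂ w₂ q₂) :
    0 ≤ ⟪u₁ - u₂, ι (w₁ - w₂)⟫ := by
  rw [← h₁.apply_sub h₂ (Submodule.sub_mem _ k₁.2 k₂.2), hAC,
    k₁.apply_sub k₂ (Submodule.sub_mem _ h₁.2 h₂.2)]
  exact real_inner_self_nonneg

end OptimalitySystem

section VariationalInequality

variable {H : Type*} [NormedAddCommGroup H] [InnerProductSpace ℝ H]

lemma mul_norm_sub_sq_le_inner_of_variational {U : Set H} {θ : ℝ} {g₁ g₂ u₁ u₂ : H}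
    (hu₁ : u₁ ∈ U) (hu₂ : u₂ ∈ U)
    (h₁ : ∀ u ∈ U, 0 ≤ ⟪g₁ + θ • u₁, u - u₁⟫) (h₂ : ∀ u ∈ U, 0 ≤ ⟪g₂ + θ • u₂, u - u₂⟫) :
    θ * ‖u₁ - u₂‖ ^ 2 ≤ ⟪g₂ - g₁, u₁ - u₂⟫ := by
  have hsum := add_nonneg (h₁ u₂ hu₂) (h₂ u₁ hu₁)
  rw [← neg_sub u₁ u₂, inner_neg_right, ← real_inner_self_eq_norm_sq] at *
  simp only [inner_add_left, inner_sub_left, real_inner_smul_left] at hsum ⊢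
  linarith

lemma mul_norm_sub_le_of_variational {U : Set H} {θ : ℝ} {g₁ g₂ g₃ u₁ u₂ : H}
    (hu₁ : u₁ ∈ U) (hu₂ : u₂ ∈ U)
    (h₁ : ∀ u ∈ U, 0 ≤ ⟪g₁ + θ • u₁, u - u₁⟫) (h₂ : ∀ u ∈ U, 0 ≤ ⟪g₂ + θ • u₂, u - u₂⟫)
    (hmono : 0 ≤ ⟪g₁ - g₃, u₁ - u₂⟫) :
    θ * ‖u₁ - u₂‖ ≤ ‖g₂ - g₃‖ := by
  have hsq : θ * ‖u₁ - u₂‖ * ‖u₁ - u₂‖ ≤ ‖g₂ - g₃‖ * ‖u₁ - u₂‖ :=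
    calc θ * ‖u₁ - u₂‖ * ‖u₁ - u₂‖ = θ * ‖u₁ - u₂‖ ^ 2 := by ring
      _ ≤ ⟪g₂ - g₁, u₁ - u₂⟫ := mul_norm_sub_sq_le_inner_of_variational hu₁ hu₂ h₁ h₂
      _ = ⟪g₂ - g₃, u₁ - u₂⟫ - ⟪g₁ - g₃, u₁ - u₂⟫ := by
        rw [← inner_sub_left, sub_sub_sub_cancel_right]
      _ ≤ ‖g₂ - g₃‖ * ‖u₁ - u₂‖ := by linarith [real_inner_le_norm (g₂ - g₃) (u₁ - u₂)]
  rcases (norm_nonneg (u₁ - u₂)).eq_or_lt with hu | hu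
  · rw [← hu, mul_zero]; positivity
  · exact le_of_mul_le_mul_right hsq hu

end VariationalInequality

lemma sq_le_of_le_add_add {e x y z : ℝ} (he : 0 ≤ e) (h : e ≤ x + y + z) :
    e ^ 2 ≤ 4 * x ^ 2 + 4 * y ^ 2 + 2 * z ^ 2 := by
  nlinarith [pow_le_pow_left₀ he h 2, sq_nonneg (x - y), sq_nonneg (x + y - z)]

lemma sq_le_of_state_and_control_bounds {C θ a e ηy ηw ηu : ℝ} (hθ : 0 < θ) (ha : 0 ≤ a)
    (he : 0 ≤ e) (he_le : e ≤ C * a + C * ηu + ηy)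
    (ha_le : θ * a ≤ C ^ 4 * ηu + C ^ 3 * ηy + C * ηw) :
    e ^ 2 ≤ 2 * (2 * (4 / θ ^ 2) * C ^ 8 + 1) * ηy ^ 2 + 2 * (4 / θ ^ 2) * C ^ 4 * ηw ^ 2 +
      2 * C ^ 2 * (2 + 2 * (4 / θ ^ 2) * C ^ 8) * ηu ^ 2 := by
  have he2 := sq_le_of_le_add_add he he_le
  have ha2 := sq_le_of_le_add_add (by positivity) ha_le
  have ha2' : 4 * a ^ 2 ≤
      4 / θ ^ 2 * (4 * (C ^ 4 * ηu) ^ 2 + 4 * (C ^ 3 * ηy) ^ 2 + 2 * (C * ηw) ^ 2) := by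
    rw [div_mul_eq_mul_div, le_div_iff₀ (by positivity)]
    linarith [mul_pow θ a 2]
  nlinarith [mul_le_mul_of_nonneg_left ha2' (sq_nonneg C)]

theorem stmt_11_general
    {V Q H : Type*}
    [NormedAddCommGroup V] [InnerProductSpace ℝ V]
    [NormedAddCommGroup Q] [InnerProductSpace ℝ Q]
    [NormedAddCommGroup H] [InnerProductSpace ℝ H]
    (ι : V →ₗ[ℝ] H) (CΩ : ℝ) (hCΩ : 0 < CΩ)
    (hι : ∀ ξ : V, ‖ι ξ‖ ≤ CΩ * ‖ξ‖)
    (A Cb : V →ₗ[ℝ] V →ₗ[ℝ] ℝ) (B : V →ₗ[ℝ] Q →ₗ[ℝ] ℝ)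
    (hAC : ∀ ξ ζ : V, A ξ ζ = Cb ζ ξ)
    (hAco : ∀ ξ : V, A ξ ξ = ‖ξ‖ ^ 2)
    (Uad : Set H)
    (θ : ℝ) (hθ : 0 < θ) (f yΩ : H)
    -- the continuous optimality system
    (ybar : V) (pbar : Q) (wbar : V) (qbar : Q) (ubar : H) (hubar : ubar ∈ Uad)
    (hst : ∀ ξ : V, A ybar ξ - B ξ pbar = ⟪f + ubar, ι ξ⟫)
    (hydiv : ∀ φ : Q, B ybar φ = 0)
    (had : ∀ ζ : V, Cb wbar ζ + B ζ qbar = ⟪ι ybar - yΩ, ι ζ⟫)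
    (hwdiv : ∀ φ : Q, B wbar φ = 0)
    (hvi : ∀ u ∈ Uad, 0 ≤ ⟪ι wbar + θ • ubar, u - ubar⟫)
    -- the (arbitrary) discrete approximation
    (yT : V) (wT : V) (uT : H)
    -- auxiliary solution (ŷ, p̂)
    (yhat : V) (phat : Q)
    (hsthat : ∀ ξ : V, A yhat ξ - B ξ phat = ⟪f + uT, ι ξ⟫)
    (hyhatdiv : ∀ φ : Q, B yhat φ = 0)
    -- auxiliary solution (ŵ, q̂)
    (what : V) (qhat : Q)
    (hadhat : ∀ ζ : V, Cb what ζ + B ζ qhat = ⟪ι yT - yΩ, ι ζ⟫)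
    (hwhatdiv : ∀ φ : Q, B what φ = 0)
    -- auxiliary control ũ
    (utilde : H) (hutilde : utilde ∈ Uad)
    (hvitilde : ∀ u ∈ Uad, 0 ≤ ⟪ι wT + θ • utilde, u - utilde⟫)
    -- auxiliary solution (ỹ, p̃)
    (ytilde : V) (ptilde : Q)
    (hsttilde : ∀ ξ : V, A ytilde ξ - B ξ ptilde = ⟪f + utilde, ι ξ⟫)
    (hytildediv : ∀ φ : Q, B ytilde φ = 0)
    -- auxiliary solution (w̃, q̃)
    (wtilde : V) (qtilde : Q)
    (hadtilde : ∀ ζ : V, Cb wtilde ζ + B ζ qtilde = ⟪ι ytilde - yΩ, ι ζ⟫)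
    (hwtildediv : ∀ φ : Q, B wtilde φ = 0)
    -- error estimators
    (ηy ηw ηu : ℝ)
    (hηy : ‖yhat - yT‖ ≤ ηy) (hηw : ‖what - wT‖ ≤ ηw)
    (hηu : ηu = ‖utilde - uT‖)
    (μ : ℝ) (hμ : μ = 4 / θ ^ 2) :
    ‖ybar - yT‖ ^ 2 ≤
      2 * (2 * μ * CΩ ^ 8 + 1) * ηy ^ 2 + 2 * μ * CΩ ^ 4 * ηw ^ 2 +
        2 * CΩ ^ 2 * (2 + 2 * μ * CΩ ^ 8) * ηu ^ 2 := by
  have hC := hCΩ.le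
  have sbar : IsStateSolution A B ι f ubar ybar pbar :=
    ⟨hst, LinearMap.mem_ker.2 (LinearMap.ext hydiv)⟩
  have shat : IsStateSolution A B ι f uT yhat phat :=
    ⟨hsthat, LinearMap.mem_ker.2 (LinearMap.ext hyhatdiv)⟩
  have stilde : IsStateSolution A B ι f utilde ytilde ptilde :=
    ⟨hsttilde, LinearMap.mem_ker.2 (LinearMap.ext hytildediv)⟩
  have abar : IsAdjointSolution Cb B ι yΩ ybar wbar qbar :=
    ⟨had, LinearMap.mem_ker.2 (LinearMap.ext hwdiv)⟩
  have ahat : IsAdjointSolution Cb B ι yΩ yT what qhat :=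
    ⟨hadhat, LinearMap.mem_ker.2 (LinearMap.ext hwhatdiv)⟩
  have atilde : IsAdjointSolution Cb B ι yΩ ytilde wtilde qtilde :=
    ⟨hadtilde, LinearMap.mem_ker.2 (LinearMap.ext hwtildediv)⟩
  set a := ‖ubar - utilde‖
  have hyT : ‖ybar - yT‖ ≤ CΩ * a + CΩ * ηu + ηy :=
    calc ‖ybar - yT‖ ≤ ‖ybar - yhat‖ + ‖yhat - yT‖ := norm_sub_le_norm_sub_add_norm_sub _ _ _
      _ ≤ CΩ * (a + ηu) + ηy := by
        refine add_le_add ((sbar.norm_sub_le hAco hC hι shat).trans ?_) hηy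
        exact mul_le_mul_of_nonneg_left (hηu ▸ norm_sub_le_norm_sub_add_norm_sub _ _ _) hC
      _ = CΩ * a + CΩ * ηu + ηy := by ring
  have hyt : ‖ytilde - yT‖ ≤ CΩ * ηu + ηy :=
    (norm_sub_le_norm_sub_add_norm_sub _ yhat _).trans
      (add_le_add (hηu ▸ stilde.norm_sub_le hAco hC hι shat) hηy)
  have hwt : ‖wtilde - wT‖ ≤ CΩ ^ 2 * (CΩ * ηu + ηy) + ηw :=
    (norm_sub_le_norm_sub_add_norm_sub _ what _).trans
      (add_le_add ((atilde.norm_sub_le hAC hAco hC hι ahat).trans (by gcongr)) hηw)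
  have hua : θ * a ≤ CΩ ^ 4 * ηu + CΩ ^ 3 * ηy + CΩ * ηw :=
    calc θ * a ≤ ‖ι wT - ι wtilde‖ := by
          refine mul_norm_sub_le_of_variational hubar hutilde hvi hvitilde ?_
          rw [real_inner_comm, ← map_sub]
          exact sbar.inner_sub_adjoint_nonneg hAC stilde abar atilde
      _ ≤ CΩ * ‖wtilde - wT‖ := by rw [← map_sub, norm_sub_rev wtilde]; exact hι _
      _ ≤ CΩ * (CΩ ^ 2 * (CΩ * ηu + ηy) + ηw) := by gcongr
      _ = CΩ ^ 4 * ηu + CΩ ^ 3 * ηy + CΩ * ηw := by ring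
  subst hμ
  exact sq_le_of_state_and_control_bounds hθ (norm_nonneg _) (norm_nonneg _) hyT hua

/-- Step 2 of the global reliability analysis: the state error bound
`‖ȳ − ȳ_T‖_V² ≤ 2(2μC_Ω⁸ + 1) η_y² + 2μC_Ω⁴ η_w² + 2C_Ω²(2 + 2μC_Ω⁸) η_u²`
with `μ = 4/θ²`. -/
theorem stmt_11
    {V Q H : Type*}
    [NormedAddCommGroup V] [InnerProductSpace ℝ V] [CompleteSpace V]
    [NormedAddCommGroup Q] [InnerProductSpace ℝ Q] [CompleteSpace Q]
    [NormedAddCommGroup H] [InnerProductSpace ℝ H] [CompleteSpace H]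
    (ι : V →ₗ[ℝ] H) (CΩ : ℝ) (hCΩ : 0 < CΩ)
    (hι : ∀ ξ : V, ‖ι ξ‖ ≤ CΩ * ‖ξ‖)
    (A Cb : V →ₗ[ℝ] V →ₗ[ℝ] ℝ) (B : V →ₗ[ℝ] Q →ₗ[ℝ] ℝ)
    (hAC : ∀ ξ ζ : V, A ξ ζ = Cb ζ ξ)
    (hAco : ∀ ξ : V, A ξ ξ = ‖ξ‖ ^ 2)
    (Cct : ℝ) (hCct : 0 < Cct)
    (hAct : ∀ ξ ζ : V, |A ξ ζ| ≤ Cct * ‖ξ‖ * ‖ζ‖)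
    (Uad : Set H) (hUne : Uad.Nonempty) (hUconv : Convex ℝ Uad)
    (θ : ℝ) (hθ : 0 < θ) (f yΩ : H)
    -- the continuous optimality system
    (ybar : V) (pbar : Q) (wbar : V) (qbar : Q) (ubar : H) (hubar : ubar ∈ Uad)
    (hst : ∀ ξ : V, A ybar ξ - B ξ pbar = ⟪f + ubar, ι ξ⟫)
    (hydiv : ∀ φ : Q, B ybar φ = 0)
    (had : ∀ ζ : V, Cb wbar ζ + B ζ qbar = ⟪ι ybar - yΩ, ι ζ⟫)
    (hwdiv : ∀ φ : Q, B wbar φ = 0)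
    (hvi : ∀ u ∈ Uad, 0 ≤ ⟪ι wbar + θ • ubar, u - ubar⟫)
    -- the (arbitrary) discrete approximation
    (yT : V) (pT : Q) (wT : V) (qT : Q) (uT : H) (huT : uT ∈ Uad)
    -- auxiliary solution (ŷ, p̂)
    (yhat : V) (phat : Q)
    (hsthat : ∀ ξ : V, A yhat ξ - B ξ phat = ⟪f + uT, ι ξ⟫)
    (hyhatdiv : ∀ φ : Q, B yhat φ = 0)
    -- auxiliary solution (ŵ, q̂)
    (what : V) (qhat : Q)
    (hadhat : ∀ ζ : V, Cb what ζ + B ζ qhat = ⟪ι yT - yΩ, ι ζ⟫)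
    (hwhatdiv : ∀ φ : Q, B what φ = 0)
    -- auxiliary control ũ
    (utilde : H) (hutilde : utilde ∈ Uad)
    (hvitilde : ∀ u ∈ Uad, 0 ≤ ⟪ι wT + θ • utilde, u - utilde⟫)
    -- auxiliary solution (ỹ, p̃)
    (ytilde : V) (ptilde : Q)
    (hsttilde : ∀ ξ : V, A ytilde ξ - B ξ ptilde = ⟪f + utilde, ι ξ⟫)
    (hytildediv : ∀ φ : Q, B ytilde φ = 0)
    -- auxiliary solution (w̃, q̃)
    (wtilde : V) (qtilde : Q)
    (hadtilde : ∀ ζ : V, Cb wtilde ζ + B ζ qtilde = ⟪ι ytilde - yΩ, ι ζ⟫)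
    (hwtildediv : ∀ φ : Q, B wtilde φ = 0)
    -- error estimators
    (ηy ηw ηu : ℝ)
    (hηy : ‖yhat - yT‖ ≤ ηy) (hηw : ‖what - wT‖ ≤ ηw)
    (hηu : ηu = ‖utilde - uT‖)
    (μ : ℝ) (hμ : μ = 4 / θ ^ 2) :
    ‖ybar - yT‖ ^ 2 ≤
      2 * (2 * μ * CΩ ^ 8 + 1) * ηy ^ 2 + 2 * μ * CΩ ^ 4 * ηw ^ 2 +
        2 * CΩ ^ 2 * (2 + 2 * μ * CΩ ^ 8) * ηu ^ 2 :=
  stmt_11_general ι CΩ hCΩ hι A Cb B hAC hAco Uad θ hθ f yΩ ybar pbar wbar qbar ubar hubar hst hydiv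
    had hwdiv hvi yT wT uT yhat phat hsthat hyhatdiv what qhat hadhat hwhatdiv utilde hutilde
    hvitilde ytilde ptilde hsttilde hytildediv wtilde qtilde hadtilde hwtildediv ηy ηw ηu hηy hηw
    hηu μ hμ
end

section
/- In the abstract optimal-control framework, assume the continuous optimality system holds for (ȳ, p̄, w̄, q̄, ū), the auxiliary solutions (ŷ, p̂), (ŵ, q̂), ũ, (ỹ, p̃), (w̃, q̃) exist, and η_y ≥ ‖ŷ − ȳ_T‖_V, η_w ≥ ‖ŵ − w̄_T‖_V, η_u = ‖ũ − ū_T‖. Then, with μ := 4/θ², ‖w̄ − w̄_T‖_V² ≤ 4 C_Ω⁴ (2 μ C_Ω⁸ + 1) η_y² + 2(2 μ C_Ω⁸ + 1) η_w² + 4 C_Ω⁶ (2 + 2 μ C_Ω⁸) η_u². -/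
open scoped RealInnerProductSpace

set_option maxHeartbeats 1000000 in
/-- Step 3 of the global reliability analysis: the adjoint state error bound
`‖w̄ − w̄_T‖_V² ≤ 4C_Ω⁴(2μC_Ω⁸ + 1) η_y² + 2(2μC_Ω⁸ + 1) η_w² + 4C_Ω⁶(2 + 2μC_Ω⁸) η_u²`
with `μ = 4/θ²`. -/
theorem stmt_12
    {V Q H : Type*}
    [NormedAddCommGroup V] [InnerProductSpace ℝ V] [CompleteSpace V]
    [NormedAddCommGroup Q] [InnerProductSpace ℝ Q] [CompleteSpace Q]
    [NormedAddCommGroup H] [InnerProductSpace ℝ H] [CompleteSpace H]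
    (ι : V →ₗ[ℝ] H) (CΩ : ℝ) (hCΩ : 0 < CΩ)
    (hι : ∀ ξ : V, ‖ι ξ‖ ≤ CΩ * ‖ξ‖)
    (A Cb : V →ₗ[ℝ] V →ₗ[ℝ] ℝ) (B : V →ₗ[ℝ] Q →ₗ[ℝ] ℝ)
    (hAC : ∀ ξ ζ : V, A ξ ζ = Cb ζ ξ)
    (hAco : ∀ ξ : V, A ξ ξ = ‖ξ‖ ^ 2)
    (Cct : ℝ) (hCct : 0 < Cct)
    (hAct : ∀ ξ ζ : V, |A ξ ζ| ≤ Cct * ‖ξ‖ * ‖ζ‖)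
    (Uad : Set H) (hUne : Uad.Nonempty) (hUconv : Convex ℝ Uad)
    (θ : ℝ) (hθ : 0 < θ) (f yΩ : H)
    -- the continuous optimality system
    (ybar : V) (pbar : Q) (wbar : V) (qbar : Q) (ubar : H) (hubar : ubar ∈ Uad)
    (hst : ∀ ξ : V, A ybar ξ - B ξ pbar = ⟪f + ubar, ι ξ⟫)
    (hydiv : ∀ φ : Q, B ybar φ = 0)
    (had : ∀ ζ : V, Cb wbar ζ + B ζ qbar = ⟪ι ybar - yΩ, ι ζ⟫)
    (hwdiv : ∀ φ : Q, B wbar φ = 0)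
    (hvi : ∀ u ∈ Uad, 0 ≤ ⟪ι wbar + θ • ubar, u - ubar⟫)
    -- the (arbitrary) discrete approximation
    (yT : V) (pT : Q) (wT : V) (qT : Q) (uT : H) (huT : uT ∈ Uad)
    -- auxiliary solution (ŷ, p̂)
    (yhat : V) (phat : Q)
    (hsthat : ∀ ξ : V, A yhat ξ - B ξ phat = ⟪f + uT, ι ξ⟫)
    (hyhatdiv : ∀ φ : Q, B yhat φ = 0)
    -- auxiliary solution (ŵ, q̂)
    (what : V) (qhat : Q)
    (hadhat : ∀ ζ : V, Cb what ζ + B ζ qhat = ⟪ι yT - yΩ, ι ζ⟫)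
    (hwhatdiv : ∀ φ : Q, B what φ = 0)
    -- auxiliary control ũ
    (utilde : H) (hutilde : utilde ∈ Uad)
    (hvitilde : ∀ u ∈ Uad, 0 ≤ ⟪ι wT + θ • utilde, u - utilde⟫)
    -- auxiliary solution (ỹ, p̃)
    (ytilde : V) (ptilde : Q)
    (hsttilde : ∀ ξ : V, A ytilde ξ - B ξ ptilde = ⟪f + utilde, ι ξ⟫)
    (hytildediv : ∀ φ : Q, B ytilde φ = 0)
    -- auxiliary solution (w̃, q̃)
    (wtilde : V) (qtilde : Q)
    (hadtilde : ∀ ζ : V, Cb wtilde ζ + B ζ qtilde = ⟪ι ytilde - yΩ, ι ζ⟫)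
    (hwtildediv : ∀ φ : Q, B wtilde φ = 0)
    -- error estimators
    (ηy ηw ηu : ℝ)
    (hηy : ‖yhat - yT‖ ≤ ηy) (hηw : ‖what - wT‖ ≤ ηw)
    (hηu : ηu = ‖utilde - uT‖)
    (μ : ℝ) (hμ : μ = 4 / θ ^ 2) :
    ‖wbar - wT‖ ^ 2 ≤
      4 * CΩ ^ 4 * (2 * μ * CΩ ^ 8 + 1) * ηy ^ 2 + 2 * (2 * μ * CΩ ^ 8 + 1) * ηw ^ 2 +
        4 * CΩ ^ 6 * (2 + 2 * μ * CΩ ^ 8) * ηu ^ 2 := by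
  -- nonnegativity of the estimators
  have hηy0 : 0 ≤ ηy := le_trans (norm_nonneg _) hηy
  have hηw0 : 0 ≤ ηw := le_trans (norm_nonneg _) hηw
  have hηu0 : 0 ≤ ηu := hηu ▸ norm_nonneg _
  -- generic state-equation stability estimate
  have Hstate : ∀ (y1 y2 : V) (p1 p2 : Q) (u1 u2 : H),
      (∀ ξ : V, A y1 ξ - B ξ p1 = ⟪f + u1, ι ξ⟫) →
      (∀ ξ : V, A y2 ξ - B ξ p2 = ⟪f + u2, ι ξ⟫) →
      (∀ φ : Q, B y1 φ = 0) → (∀ φ : Q, B y2 φ = 0) →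
      ‖y1 - y2‖ ≤ CΩ * ‖u1 - u2‖ := by
    intro y1 y2 p1 p2 u1 u2 h1 h2 d1 d2
    have he : ‖y1 - y2‖ ^ 2 = ⟪u1 - u2, ι (y1 - y2)⟫ := by
      have e1 := h1 (y1 - y2)
      have e2 := h2 (y1 - y2)
      have hco := hAco (y1 - y2)
      simp only [map_sub, LinearMap.sub_apply, d1, d2, inner_sub_left, inner_add_left,
        inner_sub_right, sub_zero] at e1 e2 hco ⊢
      linarith [e1, e2, hco]
    have hcs : ‖y1 - y2‖ ^ 2 ≤ ‖u1 - u2‖ * (CΩ * ‖y1 - y2‖) := by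
      calc ‖y1 - y2‖ ^ 2 = ⟪u1 - u2, ι (y1 - y2)⟫ := he
        _ ≤ ‖u1 - u2‖ * ‖ι (y1 - y2)‖ := real_inner_le_norm _ _
        _ ≤ ‖u1 - u2‖ * (CΩ * ‖y1 - y2‖) :=
            mul_le_mul_of_nonneg_left (hι _) (norm_nonneg _)
    nlinarith [hcs, norm_nonneg (y1 - y2), norm_nonneg (u1 - u2),
      mul_nonneg hCΩ.le (norm_nonneg (u1 - u2))]
  -- generic adjoint-equation stability estimate
  have Hadj : ∀ (w1 w2 : V) (q1 q2 : Q) (z1 z2 : V),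
      (∀ ζ : V, Cb w1 ζ + B ζ q1 = ⟪ι z1 - yΩ, ι ζ⟫) →
      (∀ ζ : V, Cb w2 ζ + B ζ q2 = ⟪ι z2 - yΩ, ι ζ⟫) →
      (∀ φ : Q, B w1 φ = 0) → (∀ φ : Q, B w2 φ = 0) →
      ‖w1 - w2‖ ≤ CΩ ^ 2 * ‖z1 - z2‖ := by
    intro w1 w2 q1 q2 z1 z2 h1 h2 d1 d2
    have he : ‖w1 - w2‖ ^ 2 = ⟪ι (z1 - z2), ι (w1 - w2)⟫ := by
      have e1 := h1 (w1 - w2)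
      have e2 := h2 (w1 - w2)
      have hco := hAco (w1 - w2)
      simp only [hAC, map_sub, LinearMap.sub_apply, d1, d2, inner_sub_left, inner_add_left,
        inner_sub_right, sub_zero] at e1 e2 hco ⊢
      linarith [e1, e2, hco]
    have hcs : ‖w1 - w2‖ ^ 2 ≤ (CΩ * ‖z1 - z2‖) * (CΩ * ‖w1 - w2‖) := by
      calc ‖w1 - w2‖ ^ 2 = ⟪ι (z1 - z2), ι (w1 - w2)⟫ := he
        _ ≤ ‖ι (z1 - z2)‖ * ‖ι (w1 - w2)‖ := real_inner_le_norm _ _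
        _ ≤ (CΩ * ‖z1 - z2‖) * (CΩ * ‖w1 - w2‖) := by
            apply mul_le_mul (hι _) (hι _) (norm_nonneg _)
            positivity
    nlinarith [hcs, norm_nonneg (w1 - w2), norm_nonneg (z1 - z2),
      mul_nonneg (mul_nonneg hCΩ.le hCΩ.le) (norm_nonneg (z1 - z2))]
  -- instantiations
  have hYU : ‖ybar - yhat‖ ≤ CΩ * ‖ubar - uT‖ :=
    Hstate ybar yhat pbar phat ubar uT hst hsthat hydiv hyhatdiv
  have hYt : ‖yhat - ytilde‖ ≤ CΩ * ‖uT - utilde‖ :=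
    Hstate yhat ytilde phat ptilde uT utilde hsthat hsttilde hyhatdiv hytildediv
  have hWY : ‖wbar - what‖ ≤ CΩ ^ 2 * ‖ybar - yT‖ :=
    Hadj wbar what qbar qhat ybar yT had hadhat hwdiv hwhatdiv
  have hWt : ‖what - wtilde‖ ≤ CΩ ^ 2 * ‖yT - ytilde‖ :=
    Hadj what wtilde qhat qtilde yT ytilde hadhat hadtilde hwhatdiv hwtildediv
  -- key sign identity
  have hkey : ⟪utilde - ubar, ι wtilde - ι wbar⟫ = ‖ι ytilde - ι ybar‖ ^ 2 := by
    have e1 := hsttilde (wtilde - wbar)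
    have e2 := hst (wtilde - wbar)
    have a1 := hadtilde (ytilde - ybar)
    have a2 := had (ytilde - ybar)
    have hN : ⟪ι ytilde - ι ybar, ι ytilde - ι ybar⟫ = ‖ι ytilde - ι ybar‖ ^ 2 :=
      real_inner_self_eq_norm_sq _
    simp only [hAC, map_sub, LinearMap.sub_apply, hwtildediv, hwdiv, hytildediv, hydiv,
      inner_sub_left, inner_sub_right, inner_add_left, sub_zero, add_zero] at e1 e2 a1 a2 hN ⊢
    linarith [e1, e2, a1, a2, hN]
  -- combining the variational inequalities
  set D := ‖ubar - utilde‖ with hD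
  have hviadd : θ * D ^ 2 ≤ ⟪ι wT - ι wbar, ubar - utilde⟫ := by
    have h1 := hvi utilde hutilde
    have h2 := hvitilde ubar hubar
    have hnθ : θ * ⟪ubar - utilde, ubar - utilde⟫ = θ * D ^ 2 := by
      rw [real_inner_self_eq_norm_sq]
    simp only [inner_add_left, real_inner_smul_left, inner_sub_left, inner_sub_right]
      at h1 h2 hnθ ⊢
    linarith [h1, h2, hnθ]
  have hlast : ⟪ι wtilde - ι wbar, ubar - utilde⟫ ≤ 0 := by
    have h := hkey
    have hnn : (0:ℝ) ≤ ‖ι ytilde - ι ybar‖ ^ 2 := sq_nonneg _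
    simp only [inner_sub_left, inner_sub_right] at h ⊢
    have c1 := real_inner_comm (ι wtilde) ubar
    have c2 := real_inner_comm (ι wtilde) utilde
    have c3 := real_inner_comm (ι wbar) ubar
    have c4 := real_inner_comm (ι wbar) utilde
    linarith
  have hsplit : ⟪ι wT - ι wbar, ubar - utilde⟫
      = ⟪ι (wT - what), ubar - utilde⟫ + ⟪ι (what - wtilde), ubar - utilde⟫
        + ⟪ι wtilde - ι wbar, ubar - utilde⟫ := by
    simp only [map_sub, inner_sub_left]
    ring
  -- estimate for the control error D
  have hwThat : ‖wT - what‖ ≤ ηw := by rw [norm_sub_rev]; exact hηw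
  have hwhatwt : ‖what - wtilde‖ ≤ CΩ ^ 2 * ηy + CΩ ^ 3 * ηu := by
    have htri : ‖yT - ytilde‖ ≤ ‖yT - yhat‖ + ‖yhat - ytilde‖ := by
      have h : yT - ytilde = (yT - yhat) + (yhat - ytilde) := by abel
      rw [h]; exact norm_add_le _ _
    have h1 : ‖yT - yhat‖ ≤ ηy := by rw [norm_sub_rev]; exact hηy
    have h2 : ‖uT - utilde‖ = ηu := by rw [norm_sub_rev]; exact hηu.symm
    have h3 : ‖yhat - ytilde‖ ≤ CΩ * ηu := by rw [← h2]; exact hYt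
    calc ‖what - wtilde‖ ≤ CΩ ^ 2 * ‖yT - ytilde‖ := hWt
      _ ≤ CΩ ^ 2 * (ηy + CΩ * ηu) := by
          apply mul_le_mul_of_nonneg_left _ (by positivity)
          linarith
      _ = CΩ ^ 2 * ηy + CΩ ^ 3 * ηu := by ring
  have hDbound : θ * D ^ 2 ≤ (CΩ * ηw + CΩ ^ 3 * ηy + CΩ ^ 4 * ηu) * D := by
    have hb1 : ⟪ι (wT - what), ubar - utilde⟫ ≤ (CΩ * ηw) * D := by
      calc ⟪ι (wT - what), ubar - utilde⟫ ≤ ‖ι (wT - what)‖ * ‖ubar - utilde‖ :=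
            real_inner_le_norm _ _
        _ ≤ (CΩ * ηw) * D := by
            apply mul_le_mul_of_nonneg_right _ (norm_nonneg _)
            calc ‖ι (wT - what)‖ ≤ CΩ * ‖wT - what‖ := hι _
              _ ≤ CΩ * ηw := mul_le_mul_of_nonneg_left hwThat hCΩ.le
    have hb2 : ⟪ι (what - wtilde), ubar - utilde⟫ ≤ (CΩ ^ 3 * ηy + CΩ ^ 4 * ηu) * D := by
      calc ⟪ι (what - wtilde), ubar - utilde⟫ ≤ ‖ι (what - wtilde)‖ * ‖ubar - utilde‖ :=
            real_inner_le_norm _ _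
        _ ≤ (CΩ ^ 3 * ηy + CΩ ^ 4 * ηu) * D := by
            apply mul_le_mul_of_nonneg_right _ (norm_nonneg _)
            calc ‖ι (what - wtilde)‖ ≤ CΩ * ‖what - wtilde‖ := hι _
              _ ≤ CΩ * (CΩ ^ 2 * ηy + CΩ ^ 3 * ηu) :=
                  mul_le_mul_of_nonneg_left hwhatwt hCΩ.le
              _ = CΩ ^ 3 * ηy + CΩ ^ 4 * ηu := by ring
    calc θ * D ^ 2 ≤ ⟪ι wT - ι wbar, ubar - utilde⟫ := hviadd
      _ = ⟪ι (wT - what), ubar - utilde⟫ + ⟪ι (what - wtilde), ubar - utilde⟫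
          + ⟪ι wtilde - ι wbar, ubar - utilde⟫ := hsplit
      _ ≤ (CΩ * ηw) * D + (CΩ ^ 3 * ηy + CΩ ^ 4 * ηu) * D + 0 :=
          add_le_add (add_le_add hb1 hb2) hlast
      _ = (CΩ * ηw + CΩ ^ 3 * ηy + CΩ ^ 4 * ηu) * D := by ring
  have hK0 : 0 ≤ CΩ * ηw + CΩ ^ 3 * ηy + CΩ ^ 4 * ηu := by positivity
  have hθD : θ * D ≤ CΩ * ηw + CΩ ^ 3 * ηy + CΩ ^ 4 * ηu := by
    rcases eq_or_lt_of_le (norm_nonneg (ubar - utilde)) with h0 | h0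
    · rw [← hD] at h0
      rw [← h0, mul_zero]; exact hK0
    · rw [← hD] at h0
      have h' : (θ * D) * D ≤ (CΩ * ηw + CΩ ^ 3 * ηy + CΩ ^ 4 * ηu) * D := by
        calc (θ * D) * D = θ * D ^ 2 := by ring
          _ ≤ (CΩ * ηw + CΩ ^ 3 * ηy + CΩ ^ 4 * ηu) * D := hDbound
      exact le_of_mul_le_mul_right h' h0
  have hK2 : θ ^ 2 * D ^ 2 ≤ 2 * CΩ ^ 2 * ηw ^ 2 + 4 * CΩ ^ 6 * ηy ^ 2 + 4 * CΩ ^ 8 * ηu ^ 2 := by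
    have hθD0 : 0 ≤ θ * D := mul_nonneg hθ.le (norm_nonneg _)
    have hsq : (θ * D) ^ 2 ≤ (CΩ * ηw + CΩ ^ 3 * ηy + CΩ ^ 4 * ηu) ^ 2 := by
      apply sq_le_sq' _ hθD
      linarith
    nlinarith [hsq, sq_nonneg (CΩ * ηw - CΩ ^ 3 * ηy - CΩ ^ 4 * ηu),
      sq_nonneg (CΩ ^ 3 * ηy - CΩ ^ 4 * ηu)]
  -- triangle inequalities and squared estimates
  set U := ‖ubar - uT‖ with hU
  set Y := ‖ybar - yT‖ with hY
  set W := ‖wbar - wT‖ with hW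
  have htriU : U ≤ D + ηu := by
    rw [hU, hηu]
    have h : ubar - uT = (ubar - utilde) + (utilde - uT) := by abel
    rw [h]; exact norm_add_le _ _
  have htriY : Y ≤ CΩ * U + ηy := by
    have h : ybar - yT = (ybar - yhat) + (yhat - yT) := by abel
    rw [hY, h]
    calc ‖(ybar - yhat) + (yhat - yT)‖ ≤ ‖ybar - yhat‖ + ‖yhat - yT‖ := norm_add_le _ _
      _ ≤ CΩ * U + ηy := add_le_add hYU hηy
  have htriW : W ≤ CΩ ^ 2 * Y + ηw := by
    have h : wbar - wT = (wbar - what) + (what - wT) := by abel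
    rw [hW, h]
    calc ‖(wbar - what) + (what - wT)‖ ≤ ‖wbar - what‖ + ‖what - wT‖ := norm_add_le _ _
      _ ≤ CΩ ^ 2 * Y + ηw := add_le_add hWY hηw
  have hU2 : U ^ 2 ≤ 2 * D ^ 2 + 2 * ηu ^ 2 := by
    nlinarith [htriU, norm_nonneg (ubar - uT), sq_nonneg (D - ηu), norm_nonneg (ubar - utilde)]
  have hY2 : Y ^ 2 ≤ 2 * CΩ ^ 2 * U ^ 2 + 2 * ηy ^ 2 := by
    nlinarith [htriY, norm_nonneg (ybar - yT), sq_nonneg (CΩ * U - ηy),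
      mul_nonneg hCΩ.le (norm_nonneg (ubar - uT))]
  have hW2 : W ^ 2 ≤ 2 * CΩ ^ 4 * Y ^ 2 + 2 * ηw ^ 2 := by
    nlinarith [htriW, norm_nonneg (wbar - wT), sq_nonneg (CΩ ^ 2 * Y - ηw),
      mul_nonneg (mul_nonneg hCΩ.le hCΩ.le) (norm_nonneg (ybar - yT))]
  -- final accounting
  have hμθ : μ * θ ^ 2 = 4 := by rw [hμ]; field_simp
  have hμ0 : 0 < μ := by rw [hμ]; positivity
  have t1 : 2 * CΩ ^ 4 * Y ^ 2 ≤ 2 * CΩ ^ 4 * (2 * CΩ ^ 2 * U ^ 2 + 2 * ηy ^ 2) :=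
    mul_le_mul_of_nonneg_left hY2 (by positivity)
  have t2 : 4 * CΩ ^ 6 * U ^ 2 ≤ 4 * CΩ ^ 6 * (2 * D ^ 2 + 2 * ηu ^ 2) :=
    mul_le_mul_of_nonneg_left hU2 (by positivity)
  have t3 : 2 * μ * CΩ ^ 6 * (θ ^ 2 * D ^ 2)
      ≤ 2 * μ * CΩ ^ 6 * (2 * CΩ ^ 2 * ηw ^ 2 + 4 * CΩ ^ 6 * ηy ^ 2 + 4 * CΩ ^ 8 * ηu ^ 2) :=
    mul_le_mul_of_nonneg_left hK2 (by positivity)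
  have t4 : 2 * μ * CΩ ^ 6 * (θ ^ 2 * D ^ 2) = 8 * CΩ ^ 6 * D ^ 2 := by
    linear_combination 2 * CΩ ^ 6 * D ^ 2 * hμθ
  linarith [hW2, t1, t2, t3, t4]
end

section
/- In the abstract optimal-control framework with inf–sup constant C_is, assume the continuous optimality system holds for (ȳ, p̄, w̄, q̄, ū), the auxiliary solutions exist, and η_y ≥ ‖ŷ − ȳ_T‖_V, η_p ≥ ‖p̂ − p̄_T‖_Q, η_w ≥ ‖ŵ − w̄_T‖_V, η_u = ‖ũ − ū_T‖. Then, with μ := 4/θ² and ω := C_is²(1 + C_ct)², ‖p̄ − p̄_T‖_Q² ≤ 4 μ ω C_Ω⁸ η_y² + 2 μ ω C_Ω⁴ η_w² + 2 ω C_Ω² (2 + 2 μ C_Ω⁸) η_u² + 2 η_p². -/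
open scoped RealInnerProductSpace

/-!
All auxiliary problems are stable saddle point problems: coercivity of the leading form gives
`‖y‖ ≤ C_Ω ‖g‖` for data `g`, and the inf–sup condition then bounds the multiplier. Hence
`‖p̄ - p̂‖ ≲ ‖ū - u_T‖ ≤ ‖ū - ũ‖ + η_u`, and `‖p̄ - p_T‖ ≤ ‖p̄ - p̂‖ + η_p`. The control error
`‖ū - ũ‖` is bounded by adding the two variational inequalities: since the state and adjoint
forms are transposes of each other, the cross term `⟪ū - ũ, ι (w̄ - w̃)⟫ = ‖ι (ȳ - ỹ)‖²` is
nonnegative and drops out, leaving `θ ‖ū - ũ‖ ≤ C_Ω ‖w_T - w̃‖ ≤ C_Ω η_w + C_Ω³ η_y + C_Ω⁴ η_u`.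
Squaring with `(a + b)² ≤ 2a² + 2b²` produces the constants.
-/

lemma mul_le_of_mul_sq_le {θ x c : ℝ} (hx : 0 ≤ x) (hc : 0 ≤ c) (h : θ * x ^ 2 ≤ c * x) :
    θ * x ≤ c := by
  rcases hx.eq_or_lt with rfl | hx
  · simpa using hc
  · exact le_of_mul_le_mul_right (by linarith) hx

lemma sq_le_two_mul_sq_add {a b c : ℝ} (ha : 0 ≤ a) (h : a ≤ b + c) :
    a ^ 2 ≤ 2 * b ^ 2 + 2 * c ^ 2 := by
  nlinarith [pow_le_pow_left₀ ha h 2, add_sq_le (a := b) (b := c)]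

section SaddlePoint

variable {V Q H : Type*} [NormedAddCommGroup V] [InnerProductSpace ℝ V]
  [NormedAddCommGroup H] [InnerProductSpace ℝ H]

structure SolvesSaddle [AddCommGroup Q] [Module ℝ Q] (a : V →ₗ[ℝ] V →ₗ[ℝ] ℝ)
    (B : V →ₗ[ℝ] Q →ₗ[ℝ] ℝ) (ι : V →ₗ[ℝ] H) (g : H) (y : V) (p : Q) : Prop where
  eqn : ∀ ξ, a y ξ - B ξ p = ⟪g, ι ξ⟫
  constraint : ∀ φ, B y φ = 0

namespace SolvesSaddle

section Module

variable [AddCommGroup Q] [Module ℝ Q] {a b : V →ₗ[ℝ] V →ₗ[ℝ] ℝ} {B : V →ₗ[ℝ] Q →ₗ[ℝ] ℝ}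
  {ι : V →ₗ[ℝ] H} {g h : H} {y w : V} {p q : Q}

lemma of_add_eq (heqn : ∀ ζ, a w ζ + B ζ q = ⟪h, ι ζ⟫) (hc : ∀ φ, B w φ = 0) :
    SolvesSaddle a B ι h w (-q) :=
  ⟨fun ζ => by simpa using heqn ζ, hc⟩

lemma sub {g₁ g₂ : H} {y₁ y₂ : V} {p₁ p₂ : Q} (h₁ : SolvesSaddle a B ι g₁ y₁ p₁)
    (h₂ : SolvesSaddle a B ι g₂ y₂ p₂) :
    SolvesSaddle a B ι (g₁ - g₂) (y₁ - y₂) (p₁ - p₂) where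
  eqn ξ := by
    simp only [map_sub, LinearMap.sub_apply, inner_sub_left, ← h₁.eqn, ← h₂.eqn]
    ring
  constraint φ := by simp [h₁.constraint, h₂.constraint]

/-- Testing each problem with the other's solution turns `a`, `b` into each other. -/
lemma inner_data_eq_of_transpose (hab : ∀ ξ ζ, a ξ ζ = b ζ ξ)
    (hy : SolvesSaddle a B ι g y p) (hw : SolvesSaddle b B ι h w q) :
    ⟪g, ι w⟫ = ⟪h, ι y⟫ := by
  rw [← hy.eqn, ← hw.eqn, hw.constraint, hy.constraint, hab]

variable {CΩ : ℝ}

lemma norm_fst_le (ha : ∀ ξ, a ξ ξ = ‖ξ‖ ^ 2) (hι : ∀ ξ, ‖ι ξ‖ ≤ CΩ * ‖ξ‖) (hCΩ : 0 ≤ CΩ)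
    (hy : SolvesSaddle a B ι g y p) : ‖y‖ ≤ CΩ * ‖g‖ := by
  have hsq : ‖y‖ ^ 2 ≤ (CΩ * ‖g‖) * ‖y‖ :=
    calc ‖y‖ ^ 2 = ⟪g, ι y⟫ := by rw [← ha, ← hy.eqn, hy.constraint, sub_zero]
      _ ≤ ‖g‖ * ‖ι y‖ := real_inner_le_norm _ _
      _ ≤ ‖g‖ * (CΩ * ‖y‖) := by gcongr; exact hι y
      _ = (CΩ * ‖g‖) * ‖y‖ := by ring
  simpa using mul_le_of_mul_sq_le (θ := 1) (norm_nonneg y) (by positivity) (by simpa using hsq)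

lemma norm_fst_sub_le {f u₁ u₂ : H} {y₁ y₂ : V} {p₁ p₂ : Q} (ha : ∀ ξ, a ξ ξ = ‖ξ‖ ^ 2)
    (hι : ∀ ξ, ‖ι ξ‖ ≤ CΩ * ‖ξ‖) (hCΩ : 0 ≤ CΩ) (h₁ : SolvesSaddle a B ι (f + u₁) y₁ p₁)
    (h₂ : SolvesSaddle a B ι (f + u₂) y₂ p₂) : ‖y₁ - y₂‖ ≤ CΩ * ‖u₁ - u₂‖ := by
  simpa only [add_sub_add_left_eq_sub] using (h₁.sub h₂).norm_fst_le ha hι hCΩ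

lemma norm_fst_sub_le_of_tracking {yΩ : H} {z₁ z₂ y₁ y₂ : V} {p₁ p₂ : Q}
    (ha : ∀ ξ, a ξ ξ = ‖ξ‖ ^ 2) (hι : ∀ ξ, ‖ι ξ‖ ≤ CΩ * ‖ξ‖) (hCΩ : 0 ≤ CΩ)
    (h₁ : SolvesSaddle a B ι (ι z₁ - yΩ) y₁ p₁) (h₂ : SolvesSaddle a B ι (ι z₂ - yΩ) y₂ p₂) :
    ‖y₁ - y₂‖ ≤ CΩ * (CΩ * ‖z₁ - z₂‖) := by
  have h := (h₁.sub h₂).norm_fst_le ha hι hCΩ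
  rw [sub_sub_sub_cancel_right, ← map_sub] at h
  exact h.trans (by gcongr; exact hι _)

end Module

variable [NormedAddCommGroup Q] [InnerProductSpace ℝ Q] {a : V →ₗ[ℝ] V →ₗ[ℝ] ℝ}
  {B : V →ₗ[ℝ] Q →ₗ[ℝ] ℝ} {ι : V →ₗ[ℝ] H} {g : H} {y : V} {p : Q} {CΩ Cct Cis : ℝ}

lemma norm_snd_le (hι : ∀ ξ, ‖ι ξ‖ ≤ CΩ * ‖ξ‖) (hact : ∀ ξ ζ, |a ξ ζ| ≤ Cct * ‖ξ‖ * ‖ζ‖)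
    (hinfsup : ∀ φ : Q, ∀ c : ℝ, (∀ ξ : V, B ξ φ ≤ c * ‖ξ‖) → ‖φ‖ ≤ Cis * c)
    (hy : SolvesSaddle a B ι g y p) : ‖p‖ ≤ Cis * (Cct * ‖y‖ + CΩ * ‖g‖) := by
  refine hinfsup p _ fun ξ => ?_
  have hB : B ξ p = a y ξ - ⟪g, ι ξ⟫ := by rw [← hy.eqn]; ring
  have ha : a y ξ ≤ Cct * ‖y‖ * ‖ξ‖ := (le_abs_self _).trans (hact y ξ)
  have hg : -⟪g, ι ξ⟫ ≤ ‖g‖ * (CΩ * ‖ξ‖) :=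
    (neg_le_abs _).trans ((abs_real_inner_le_norm _ _).trans (by gcongr; exact hι ξ))
  rw [hB]
  linarith

lemma norm_snd_sub_le {f u₁ u₂ : H} {y₁ y₂ : V} {p₁ p₂ : Q} (ha : ∀ ξ, a ξ ξ = ‖ξ‖ ^ 2)
    (hι : ∀ ξ, ‖ι ξ‖ ≤ CΩ * ‖ξ‖) (hCΩ : 0 ≤ CΩ) (hact : ∀ ξ ζ, |a ξ ζ| ≤ Cct * ‖ξ‖ * ‖ζ‖)
    (hCct : 0 ≤ Cct) (hCis : 0 ≤ Cis)
    (hinfsup : ∀ φ : Q, ∀ c : ℝ, (∀ ξ : V, B ξ φ ≤ c * ‖ξ‖) → ‖φ‖ ≤ Cis * c)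
    (h₁ : SolvesSaddle a B ι (f + u₁) y₁ p₁) (h₂ : SolvesSaddle a B ι (f + u₂) y₂ p₂) :
    ‖p₁ - p₂‖ ≤ Cis * ((1 + Cct) * CΩ * ‖u₁ - u₂‖) := by
  have hy := norm_fst_sub_le ha hι hCΩ h₁ h₂
  have hp := (h₁.sub h₂).norm_snd_le hι hact hinfsup
  rw [add_sub_add_left_eq_sub] at hp
  refine hp.trans ?_
  gcongr
  linarith [mul_le_mul_of_nonneg_left hy hCct]

end SolvesSaddle

end SaddlePoint

section VariationalInequality

variable {H : Type*} [NormedAddCommGroup H] [InnerProductSpace ℝ H]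

lemma mul_norm_sub_sq_le_inner_of_variational_s13 {K : Set H} {θ : ℝ} {a b u v : H}
    (hu : u ∈ K) (hv : v ∈ K)
    (hau : ∀ x ∈ K, 0 ≤ ⟪a + θ • u, x - u⟫) (hbv : ∀ x ∈ K, 0 ≤ ⟪b + θ • v, x - v⟫) :
    θ * ‖u - v‖ ^ 2 ≤ ⟪b - a, u - v⟫ := by
  have h₁ := hau v hv
  have h₂ := hbv u hu
  rw [← neg_sub u v, inner_neg_right] at h₁
  rw [← real_inner_self_eq_norm_sq]
  simp only [inner_add_left, inner_sub_left, real_inner_smul_left] at h₁ h₂ ⊢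
  linarith

variable {V : Type*} [NormedAddCommGroup V] [InnerProductSpace ℝ V]

lemma mul_norm_le_of_mul_sq_le_inner {ι : V →ₗ[ℝ] H} {CΩ θ : ℝ}
    (hι : ∀ ξ, ‖ι ξ‖ ≤ CΩ * ‖ξ‖) (hCΩ : 0 ≤ CΩ) {x : V} {d : H} (h : θ * ‖d‖ ^ 2 ≤ ⟪ι x, d⟫) :
    θ * ‖d‖ ≤ CΩ * ‖x‖ := by
  refine mul_le_of_mul_sq_le (norm_nonneg d) (by positivity) ?_
  calc θ * ‖d‖ ^ 2 ≤ ‖ι x‖ * ‖d‖ := h.trans (real_inner_le_norm _ _)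
    _ ≤ (CΩ * ‖x‖) * ‖d‖ := by gcongr; exact hι x

variable {Q : Type*} [AddCommGroup Q] [Module ℝ Q]

lemma mul_norm_control_sub_le {A Cb : V →ₗ[ℝ] V →ₗ[ℝ] ℝ} {B : V →ₗ[ℝ] Q →ₗ[ℝ] ℝ}
    {ι : V →ₗ[ℝ] H} {CΩ θ : ℝ} {K : Set H} {f yΩ u₁ u₂ : H} {y₁ y₂ w₁ w₂ z : V}
    {p₁ p₂ q₁ q₂ : Q}
    (hι : ∀ ξ, ‖ι ξ‖ ≤ CΩ * ‖ξ‖) (hCΩ : 0 ≤ CΩ) (hAC : ∀ ξ ζ, A ξ ζ = Cb ζ ξ)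
    (hy₁ : SolvesSaddle A B ι (f + u₁) y₁ p₁) (hy₂ : SolvesSaddle A B ι (f + u₂) y₂ p₂)
    (hw₁ : SolvesSaddle Cb B ι (ι y₁ - yΩ) w₁ q₁) (hw₂ : SolvesSaddle Cb B ι (ι y₂ - yΩ) w₂ q₂)
    (hu₁ : u₁ ∈ K) (hu₂ : u₂ ∈ K)
    (hvi₁ : ∀ u ∈ K, 0 ≤ ⟪ι w₁ + θ • u₁, u - u₁⟫) (hvi₂ : ∀ u ∈ K, 0 ≤ ⟪ι z + θ • u₂, u - u₂⟫) :
    θ * ‖u₁ - u₂‖ ≤ CΩ * ‖z - w₂‖ := by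
  have hcross : ⟪u₁ - u₂, ι (w₁ - w₂)⟫ = ⟪ι (y₁ - y₂), ι (y₁ - y₂)⟫ := by
    have h := (hy₁.sub hy₂).inner_data_eq_of_transpose hAC (hw₁.sub hw₂)
    rwa [add_sub_add_left_eq_sub, sub_sub_sub_cancel_right, ← map_sub] at h
  have hmono := mul_norm_sub_sq_le_inner_of_variational_s13 hu₁ hu₂ hvi₁ hvi₂
  have hsplit : ⟪ι z - ι w₁, u₁ - u₂⟫ = ⟪ι (z - w₂), u₁ - u₂⟫ - ⟪u₁ - u₂, ι (w₁ - w₂)⟫ := by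
    rw [real_inner_comm (ι (w₁ - w₂))]
    simp only [map_sub, inner_sub_left]
    ring
  refine mul_norm_le_of_mul_sq_le_inner hι hCΩ ?_
  linarith [real_inner_self_nonneg (x := ι (y₁ - y₂))]

end VariationalInequality

lemma pressure_sq_le_of_error_chain {P R E D θ CΩ Cct Cis ηy ηp ηw ηu μ ω : ℝ}
    (hP : 0 ≤ P) (hR : 0 ≤ R) (hE : 0 ≤ E) (hD : 0 ≤ D) (hθ : 0 < θ)
    (hPR : P ≤ R + ηp) (hRE : R ≤ Cis * ((1 + Cct) * CΩ * E)) (hED : E ≤ D + ηu)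
    (hDη : θ * D ≤ CΩ * ηw + CΩ ^ 3 * ηy + CΩ ^ 4 * ηu)
    (hμ : μ = 4 / θ ^ 2) (hω : ω = Cis ^ 2 * (1 + Cct) ^ 2) :
    P ^ 2 ≤ 4 * μ * ω * CΩ ^ 8 * ηy ^ 2 + 2 * μ * ω * CΩ ^ 4 * ηw ^ 2 +
      2 * ω * CΩ ^ 2 * (2 + 2 * μ * CΩ ^ 8) * ηu ^ 2 + 2 * ηp ^ 2 := by
  set S := 2 * CΩ ^ 2 * ηw ^ 2 + 4 * CΩ ^ 6 * ηy ^ 2 + 4 * CΩ ^ 8 * ηu ^ 2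
  have hθD : (θ * D) ^ 2 ≤ S := by
    calc (θ * D) ^ 2 ≤ 2 * (CΩ * ηw) ^ 2 + 2 * (CΩ ^ 3 * ηy + CΩ ^ 4 * ηu) ^ 2 :=
          sq_le_two_mul_sq_add (by positivity) (hDη.trans_eq (add_assoc _ _ _))
      _ ≤ 2 * (CΩ * ηw) ^ 2 + 2 * (2 * ((CΩ ^ 3 * ηy) ^ 2 + (CΩ ^ 4 * ηu) ^ 2)) := by
          gcongr; exact add_sq_le
      _ = S := by ring
  have hDS : D ^ 2 ≤ μ / 4 * S := by
    rw [hμ, div_div_cancel_left' four_ne_zero, ← div_eq_inv_mul, le_div_iff₀ (by positivity)]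
    linarith [mul_pow θ D 2]
  have hRE' : R ^ 2 ≤ ω * CΩ ^ 2 * E ^ 2 := by
    rw [hω]; nlinarith [pow_le_pow_left₀ hR hRE 2]
  have hω0 : 0 ≤ ω := by rw [hω]; positivity
  calc P ^ 2 ≤ 2 * R ^ 2 + 2 * ηp ^ 2 := sq_le_two_mul_sq_add hP hPR
    _ ≤ 2 * (ω * CΩ ^ 2 * (2 * D ^ 2 + 2 * ηu ^ 2)) + 2 * ηp ^ 2 := by
      gcongr; exact hRE'.trans (by gcongr; exact sq_le_two_mul_sq_add hE hED)
    _ ≤ 2 * (ω * CΩ ^ 2 * (2 * (μ / 4 * S) + 2 * ηu ^ 2)) + 2 * ηp ^ 2 := by gcongr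
    _ = _ := by ring

theorem stmt_13_general
    {V Q H : Type*}
    [NormedAddCommGroup V] [InnerProductSpace ℝ V]
    [NormedAddCommGroup Q] [InnerProductSpace ℝ Q]
    [NormedAddCommGroup H] [InnerProductSpace ℝ H]
    (ι : V →ₗ[ℝ] H) (CΩ : ℝ) (hCΩ : 0 < CΩ)
    (hι : ∀ ξ : V, ‖ι ξ‖ ≤ CΩ * ‖ξ‖)
    (A Cb : V →ₗ[ℝ] V →ₗ[ℝ] ℝ) (B : V →ₗ[ℝ] Q →ₗ[ℝ] ℝ)
    (hAC : ∀ ξ ζ : V, A ξ ζ = Cb ζ ξ)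
    (hAco : ∀ ξ : V, A ξ ξ = ‖ξ‖ ^ 2)
    (Cct : ℝ) (hCct : 0 < Cct)
    (hAct : ∀ ξ ζ : V, |A ξ ζ| ≤ Cct * ‖ξ‖ * ‖ζ‖)
    (Uad : Set H)
    (θ : ℝ) (hθ : 0 < θ) (f yΩ : H)
    -- the continuous optimality system
    (ybar : V) (pbar : Q) (wbar : V) (qbar : Q) (ubar : H) (hubar : ubar ∈ Uad)
    (hst : ∀ ξ : V, A ybar ξ - B ξ pbar = ⟪f + ubar, ι ξ⟫)
    (hydiv : ∀ φ : Q, B ybar φ = 0)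
    (had : ∀ ζ : V, Cb wbar ζ + B ζ qbar = ⟪ι ybar - yΩ, ι ζ⟫)
    (hwdiv : ∀ φ : Q, B wbar φ = 0)
    (hvi : ∀ u ∈ Uad, 0 ≤ ⟪ι wbar + θ • ubar, u - ubar⟫)
    -- the (arbitrary) discrete approximation
    (yT : V) (pT : Q) (wT : V) (uT : H)
    -- auxiliary solution (ŷ, p̂)
    (yhat : V) (phat : Q)
    (hsthat : ∀ ξ : V, A yhat ξ - B ξ phat = ⟪f + uT, ι ξ⟫)
    (hyhatdiv : ∀ φ : Q, B yhat φ = 0)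
    -- auxiliary solution (ŵ, q̂)
    (what : V) (qhat : Q)
    (hadhat : ∀ ζ : V, Cb what ζ + B ζ qhat = ⟪ι yT - yΩ, ι ζ⟫)
    (hwhatdiv : ∀ φ : Q, B what φ = 0)
    -- auxiliary control ũ
    (utilde : H) (hutilde : utilde ∈ Uad)
    (hvitilde : ∀ u ∈ Uad, 0 ≤ ⟪ι wT + θ • utilde, u - utilde⟫)
    -- auxiliary solution (ỹ, p̃)
    (ytilde : V) (ptilde : Q)
    (hsttilde : ∀ ξ : V, A ytilde ξ - B ξ ptilde = ⟪f + utilde, ι ξ⟫)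
    (hytildediv : ∀ φ : Q, B ytilde φ = 0)
    -- auxiliary solution (w̃, q̃)
    (wtilde : V) (qtilde : Q)
    (hadtilde : ∀ ζ : V, Cb wtilde ζ + B ζ qtilde = ⟪ι ytilde - yΩ, ι ζ⟫)
    (hwtildediv : ∀ φ : Q, B wtilde φ = 0)
    -- the inf–sup condition
    (Cis : ℝ) (hCis : 0 < Cis)
    (hinfsup : ∀ φ : Q, ∀ c : ℝ, (∀ ξ : V, B ξ φ ≤ c * ‖ξ‖) → ‖φ‖ ≤ Cis * c)
    -- error estimators
    (ηy ηp ηw ηu : ℝ)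
    (hηy : ‖yhat - yT‖ ≤ ηy) (hηp : ‖phat - pT‖ ≤ ηp)
    (hηw : ‖what - wT‖ ≤ ηw)
    (hηu : ηu = ‖utilde - uT‖)
    (μ ω : ℝ) (hμ : μ = 4 / θ ^ 2) (hω : ω = Cis ^ 2 * (1 + Cct) ^ 2) :
    ‖pbar - pT‖ ^ 2 ≤
      4 * μ * ω * CΩ ^ 8 * ηy ^ 2 + 2 * μ * ω * CΩ ^ 4 * ηw ^ 2 +
        2 * ω * CΩ ^ 2 * (2 + 2 * μ * CΩ ^ 8) * ηu ^ 2 + 2 * ηp ^ 2 := by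
  have hSybar : SolvesSaddle A B ι (f + ubar) ybar pbar := ⟨hst, hydiv⟩
  have hSyhat : SolvesSaddle A B ι (f + uT) yhat phat := ⟨hsthat, hyhatdiv⟩
  have hSytilde : SolvesSaddle A B ι (f + utilde) ytilde ptilde := ⟨hsttilde, hytildediv⟩
  have hSwbar := SolvesSaddle.of_add_eq had hwdiv
  have hSwhat := SolvesSaddle.of_add_eq hadhat hwhatdiv
  have hSwtilde := SolvesSaddle.of_add_eq hadtilde hwtildediv
  have hCb : ∀ ξ, Cb ξ ξ = ‖ξ‖ ^ 2 := fun ξ => hAC ξ ξ ▸ hAco ξ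
  have hphat : ‖pbar - phat‖ ≤ Cis * ((1 + Cct) * CΩ * ‖ubar - uT‖) :=
    SolvesSaddle.norm_snd_sub_le hAco hι hCΩ.le hAct hCct.le hCis.le hinfsup hSybar hSyhat
  have hyT : ‖yT - ytilde‖ ≤ ηy + CΩ * ηu := by
    refine (norm_sub_le_norm_sub_add_norm_sub _ yhat _).trans ?_
    rw [norm_sub_rev, hηu, norm_sub_rev utilde]
    gcongr
    exact SolvesSaddle.norm_fst_sub_le hAco hι hCΩ.le hSyhat hSytilde
  have hwT : ‖wT - wtilde‖ ≤ ηw + CΩ * (CΩ * (ηy + CΩ * ηu)) := by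
    refine (norm_sub_le_norm_sub_add_norm_sub _ what _).trans ?_
    rw [norm_sub_rev]
    gcongr
    exact (SolvesSaddle.norm_fst_sub_le_of_tracking hCb hι hCΩ.le hSwhat hSwtilde).trans
      (by gcongr)
  have hcontrol : θ * ‖ubar - utilde‖ ≤ CΩ * ηw + CΩ ^ 3 * ηy + CΩ ^ 4 * ηu :=
    calc θ * ‖ubar - utilde‖ ≤ CΩ * ‖wT - wtilde‖ :=
          mul_norm_control_sub_le hι hCΩ.le hAC hSybar hSytilde hSwbar hSwtilde hubar hutilde
            hvi hvitilde
      _ ≤ CΩ * (ηw + CΩ * (CΩ * (ηy + CΩ * ηu))) := by gcongr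
      _ = CΩ * ηw + CΩ ^ 3 * ηy + CΩ ^ 4 * ηu := by ring
  have hpT : ‖pbar - pT‖ ≤ ‖pbar - phat‖ + ηp :=
    (norm_sub_le_norm_sub_add_norm_sub _ phat _).trans (by gcongr)
  have huT : ‖ubar - uT‖ ≤ ‖ubar - utilde‖ + ηu :=
    hηu ▸ norm_sub_le_norm_sub_add_norm_sub _ _ _
  exact pressure_sq_le_of_error_chain (norm_nonneg _) (norm_nonneg _) (norm_nonneg _)
    (norm_nonneg _) hθ hpT hphat huT hcontrol hμ hω

/-- Step 4 of the global reliability analysis: the pressure error bound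
`‖p̄ − p̄_T‖_Q² ≤ 4μωC_Ω⁸ η_y² + 2μωC_Ω⁴ η_w² + 2ωC_Ω²(2 + 2μC_Ω⁸) η_u² + 2η_p²`
with `μ = 4/θ²` and `ω = C_is²(1 + C_ct)²`. The inf–sup condition
`‖φ‖_Q ≤ C_is · sup_{ξ ≠ 0} B(ξ,φ)/‖ξ‖_V` is encoded through upper bounds of the
set `{B(ξ,φ)/‖ξ‖_V : ξ ≠ 0}`. -/
theorem stmt_13
    {V Q H : Type*}
    [NormedAddCommGroup V] [InnerProductSpace ℝ V] [CompleteSpace V]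
    [NormedAddCommGroup Q] [InnerProductSpace ℝ Q] [CompleteSpace Q]
    [NormedAddCommGroup H] [InnerProductSpace ℝ H] [CompleteSpace H]
    (ι : V →ₗ[ℝ] H) (CΩ : ℝ) (hCΩ : 0 < CΩ)
    (hι : ∀ ξ : V, ‖ι ξ‖ ≤ CΩ * ‖ξ‖)
    (A Cb : V →ₗ[ℝ] V →ₗ[ℝ] ℝ) (B : V →ₗ[ℝ] Q →ₗ[ℝ] ℝ)
    (hAC : ∀ ξ ζ : V, A ξ ζ = Cb ζ ξ)
    (hAco : ∀ ξ : V, A ξ ξ = ‖ξ‖ ^ 2)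
    (Cct : ℝ) (hCct : 0 < Cct)
    (hAct : ∀ ξ ζ : V, |A ξ ζ| ≤ Cct * ‖ξ‖ * ‖ζ‖)
    (Uad : Set H) (hUne : Uad.Nonempty) (hUconv : Convex ℝ Uad)
    (θ : ℝ) (hθ : 0 < θ) (f yΩ : H)
    -- the continuous optimality system
    (ybar : V) (pbar : Q) (wbar : V) (qbar : Q) (ubar : H) (hubar : ubar ∈ Uad)
    (hst : ∀ ξ : V, A ybar ξ - B ξ pbar = ⟪f + ubar, ι ξ⟫)
    (hydiv : ∀ φ : Q, B ybar φ = 0)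
    (had : ∀ ζ : V, Cb wbar ζ + B ζ qbar = ⟪ι ybar - yΩ, ι ζ⟫)
    (hwdiv : ∀ φ : Q, B wbar φ = 0)
    (hvi : ∀ u ∈ Uad, 0 ≤ ⟪ι wbar + θ • ubar, u - ubar⟫)
    -- the (arbitrary) discrete approximation
    (yT : V) (pT : Q) (wT : V) (qT : Q) (uT : H) (huT : uT ∈ Uad)
    -- auxiliary solution (ŷ, p̂)
    (yhat : V) (phat : Q)
    (hsthat : ∀ ξ : V, A yhat ξ - B ξ phat = ⟪f + uT, ι ξ⟫)
    (hyhatdiv : ∀ φ : Q, B yhat φ = 0)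
    -- auxiliary solution (ŵ, q̂)
    (what : V) (qhat : Q)
    (hadhat : ∀ ζ : V, Cb what ζ + B ζ qhat = ⟪ι yT - yΩ, ι ζ⟫)
    (hwhatdiv : ∀ φ : Q, B what φ = 0)
    -- auxiliary control ũ
    (utilde : H) (hutilde : utilde ∈ Uad)
    (hvitilde : ∀ u ∈ Uad, 0 ≤ ⟪ι wT + θ • utilde, u - utilde⟫)
    -- auxiliary solution (ỹ, p̃)
    (ytilde : V) (ptilde : Q)
    (hsttilde : ∀ ξ : V, A ytilde ξ - B ξ ptilde = ⟪f + utilde, ι ξ⟫)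
    (hytildediv : ∀ φ : Q, B ytilde φ = 0)
    -- auxiliary solution (w̃, q̃)
    (wtilde : V) (qtilde : Q)
    (hadtilde : ∀ ζ : V, Cb wtilde ζ + B ζ qtilde = ⟪ι ytilde - yΩ, ι ζ⟫)
    (hwtildediv : ∀ φ : Q, B wtilde φ = 0)
    -- the inf–sup condition
    (Cis : ℝ) (hCis : 0 < Cis)
    (hinfsup : ∀ φ : Q, ∀ c : ℝ, (∀ ξ : V, B ξ φ ≤ c * ‖ξ‖) → ‖φ‖ ≤ Cis * c)
    -- error estimators
    (ηy ηp ηw ηu : ℝ)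
    (hηy : ‖yhat - yT‖ ≤ ηy) (hηp : ‖phat - pT‖ ≤ ηp)
    (hηw : ‖what - wT‖ ≤ ηw)
    (hηu : ηu = ‖utilde - uT‖)
    (μ ω : ℝ) (hμ : μ = 4 / θ ^ 2) (hω : ω = Cis ^ 2 * (1 + Cct) ^ 2) :
    ‖pbar - pT‖ ^ 2 ≤
      4 * μ * ω * CΩ ^ 8 * ηy ^ 2 + 2 * μ * ω * CΩ ^ 4 * ηw ^ 2 +
        2 * ω * CΩ ^ 2 * (2 + 2 * μ * CΩ ^ 8) * ηu ^ 2 + 2 * ηp ^ 2 :=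
  stmt_13_general ι CΩ hCΩ hι A Cb B hAC hAco Cct hCct hAct Uad θ hθ f yΩ ybar pbar wbar qbar ubar
    hubar hst hydiv had hwdiv hvi yT pT wT uT yhat phat hsthat hyhatdiv what qhat hadhat hwhatdiv
    utilde hutilde hvitilde ytilde ptilde hsttilde hytildediv wtilde qtilde hadtilde hwtildediv Cis
    hCis hinfsup ηy ηp ηw ηu hηy hηp hηw hηu μ ω hμ hω
end

section
/- (Global reliability, Theorem 5.1, abstract form.) In the abstract optimal-control framework, assume the continuous optimality system holds for (ȳ, p̄, w̄, q̄, ū), the auxiliary solutions (ŷ, p̂), (ŵ, q̂), ũ, (ỹ, p̃), (w̃, q̃) exist, and η_y ≥ ‖ŷ − ȳ_T‖_V, η_p ≥ ‖p̂ − p̄_T‖_Q, η_w ≥ ‖ŵ − w̄_T‖_V, η_q ≥ ‖q̂ − q̄_T‖_Q, η_u = ‖ũ − ū_T‖. Let ϱ ≥ 0, μ := 4/θ², ω := C_is²(1 + C_ct)², and define 𝔠_y := 2 + 2μC_Ω⁶ + 4(1 + ϱω)(C_Ω⁴ + μC_Ω⁸ + 2μC_Ω¹²), 𝔠_w := 2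 + μC_Ω² + 2μ(1 + ϱω)(C_Ω⁴ + 2C_Ω⁸), 𝔠_u := 2 + 2μC_Ω⁸ + 4(1 + ϱω)(C_Ω² + 2C_Ω⁶ + μC_Ω¹⁰ + 2μC_Ω¹⁴). Then ‖ȳ − ȳ_T‖_V² + ϱ‖p̄ − p̄_T‖_Q² + ‖w̄ − w̄_T‖_V² + ϱ‖q̄ − q̄_T‖_Q² + ‖ū − ū_T‖² ≤ 𝔠_y η_y² + 2ϱ η_p² + 𝔠_w η_w² + 2ϱ η_q² + 𝔠_u η_u². -/
open scoped RealInnerProductSpace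

private lemma aux_norm_le' {c x : ℝ} (hx : 0 ≤ x) (hc : 0 ≤ c) (h : x^2 ≤ c*x) : x ≤ c := by
  rcases hx.eq_or_lt with h0 | h0
  · linarith
  · nlinarith

private lemma sq_le_two' {a b c : ℝ} (hc : 0 ≤ c) (h : c ≤ a + b) : c^2 ≤ 2*a^2 + 2*b^2 := by
  nlinarith [sq_nonneg (a-b), sq_nonneg (a+b-c)]

private lemma gen_energy {V H : Type*} [NormedAddCommGroup V] [InnerProductSpace ℝ V]
    [NormedAddCommGroup H] [InnerProductSpace ℝ H]
    (ι : V →ₗ[ℝ] H) (CΩ : ℝ) (hCΩ : 0 ≤ CΩ) (hι : ∀ ξ : V, ‖ι ξ‖ ≤ CΩ * ‖ξ‖)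
    (e : V) (g : H) (hkey : ‖e‖^2 = ⟪g, ι e⟫) : ‖e‖ ≤ CΩ * ‖g‖ := by
  have h1 : ⟪g, ι e⟫ ≤ ‖g‖ * ‖ι e‖ := real_inner_le_norm g (ι e)
  have h2 := hι e
  apply aux_norm_le' (norm_nonneg e) (by positivity)
  nlinarith [norm_nonneg g, norm_nonneg (ι e), norm_nonneg e]
set_option maxHeartbeats 1000000 in
/-- Global reliability (Theorem 5.1, abstract form): the total error is bounded by
`𝔠_y η_y² + 2ϱ η_p² + 𝔠_w η_w² + 2ϱ η_q² + 𝔠_u η_u²` with `μ = 4/θ²`,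
`ω = C_is²(1 + C_ct)²` and the constants `𝔠_y`, `𝔠_w`, `𝔠_u` as in the paper.
The inf–sup condition `‖φ‖_Q ≤ C_is · sup_{ξ ≠ 0} B(ξ,φ)/‖ξ‖_V` is encoded through
upper bounds of the set `{B(ξ,φ)/‖ξ‖_V : ξ ≠ 0}`. -/
theorem stmt_14
    {V Q H : Type*}
    [NormedAddCommGroup V] [InnerProductSpace ℝ V] [CompleteSpace V]
    [NormedAddCommGroup Q] [InnerProductSpace ℝ Q] [CompleteSpace Q]
    [NormedAddCommGroup H] [InnerProductSpace ℝ H] [CompleteSpace H]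
    (ι : V →ₗ[ℝ] H) (CΩ : ℝ) (hCΩ : 0 < CΩ)
    (hι : ∀ ξ : V, ‖ι ξ‖ ≤ CΩ * ‖ξ‖)
    (A Cb : V →ₗ[ℝ] V →ₗ[ℝ] ℝ) (B : V →ₗ[ℝ] Q →ₗ[ℝ] ℝ)
    (hAC : ∀ ξ ζ : V, A ξ ζ = Cb ζ ξ)
    (hAco : ∀ ξ : V, A ξ ξ = ‖ξ‖ ^ 2)
    (Cct : ℝ) (hCct : 0 < Cct)
    (hAct : ∀ ξ ζ : V, |A ξ ζ| ≤ Cct * ‖ξ‖ * ‖ζ‖)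
    (Uad : Set H) (hUne : Uad.Nonempty) (hUconv : Convex ℝ Uad)
    (θ : ℝ) (hθ : 0 < θ) (f yΩ : H)
    -- the continuous optimality system
    (ybar : V) (pbar : Q) (wbar : V) (qbar : Q) (ubar : H) (hubar : ubar ∈ Uad)
    (hst : ∀ ξ : V, A ybar ξ - B ξ pbar = ⟪f + ubar, ι ξ⟫)
    (hydiv : ∀ φ : Q, B ybar φ = 0)
    (had : ∀ ζ : V, Cb wbar ζ + B ζ qbar = ⟪ι ybar - yΩ, ι ζ⟫)
    (hwdiv : ∀ φ : Q, B wbar φ = 0)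
    (hvi : ∀ u ∈ Uad, 0 ≤ ⟪ι wbar + θ • ubar, u - ubar⟫)
    -- the (arbitrary) discrete approximation
    (yT : V) (pT : Q) (wT : V) (qT : Q) (uT : H) (huT : uT ∈ Uad)
    -- auxiliary solution (ŷ, p̂)
    (yhat : V) (phat : Q)
    (hsthat : ∀ ξ : V, A yhat ξ - B ξ phat = ⟪f + uT, ι ξ⟫)
    (hyhatdiv : ∀ φ : Q, B yhat φ = 0)
    -- auxiliary solution (ŵ, q̂)
    (what : V) (qhat : Q)
    (hadhat : ∀ ζ : V, Cb what ζ + B ζ qhat = ⟪ι yT - yΩ, ι ζ⟫)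
    (hwhatdiv : ∀ φ : Q, B what φ = 0)
    -- auxiliary control ũ
    (utilde : H) (hutilde : utilde ∈ Uad)
    (hvitilde : ∀ u ∈ Uad, 0 ≤ ⟪ι wT + θ • utilde, u - utilde⟫)
    -- auxiliary solution (ỹ, p̃)
    (ytilde : V) (ptilde : Q)
    (hsttilde : ∀ ξ : V, A ytilde ξ - B ξ ptilde = ⟪f + utilde, ι ξ⟫)
    (hytildediv : ∀ φ : Q, B ytilde φ = 0)
    -- auxiliary solution (w̃, q̃)
    (wtilde : V) (qtilde : Q)
    (hadtilde : ∀ ζ : V, Cb wtilde ζ + B ζ qtilde = ⟪ι ytilde - yΩ, ι ζ⟫)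
    (hwtildediv : ∀ φ : Q, B wtilde φ = 0)
    -- the inf–sup condition
    (Cis : ℝ) (hCis : 0 < Cis)
    (hinfsup : ∀ φ : Q, ∀ c : ℝ, (∀ ξ : V, B ξ φ ≤ c * ‖ξ‖) → ‖φ‖ ≤ Cis * c)
    -- error estimators
    (ηy ηp ηw ηq ηu : ℝ)
    (hηy : ‖yhat - yT‖ ≤ ηy) (hηp : ‖phat - pT‖ ≤ ηp)
    (hηw : ‖what - wT‖ ≤ ηw) (hηq : ‖qhat - qT‖ ≤ ηq)
    (hηu : ηu = ‖utilde - uT‖)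
    (ϱ : ℝ) (hϱ : 0 ≤ ϱ)
    (μ ω : ℝ) (hμ : μ = 4 / θ ^ 2) (hω : ω = Cis ^ 2 * (1 + Cct) ^ 2)
    (cy cw cu : ℝ)
    (hcy : cy = 2 + 2 * μ * CΩ ^ 6 +
      4 * (1 + ϱ * ω) * (CΩ ^ 4 + μ * CΩ ^ 8 + 2 * μ * CΩ ^ 12))
    (hcw : cw = 2 + μ * CΩ ^ 2 + 2 * μ * (1 + ϱ * ω) * (CΩ ^ 4 + 2 * CΩ ^ 8))
    (hcu : cu = 2 + 2 * μ * CΩ ^ 8 +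
      4 * (1 + ϱ * ω) * (CΩ ^ 2 + 2 * CΩ ^ 6 + μ * CΩ ^ 10 + 2 * μ * CΩ ^ 14)) :
    ‖ybar - yT‖ ^ 2 + ϱ * ‖pbar - pT‖ ^ 2 + ‖wbar - wT‖ ^ 2 + ϱ * ‖qbar - qT‖ ^ 2 +
        ‖ubar - uT‖ ^ 2 ≤
      cy * ηy ^ 2 + 2 * ϱ * ηp ^ 2 + cw * ηw ^ 2 + 2 * ϱ * ηq ^ 2 + cu * ηu ^ 2 := by
  -- basic nonnegativity
  have hCΩ0 : (0:ℝ) ≤ CΩ := hCΩ.le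
  have hηy0 : (0:ℝ) ≤ ηy := le_trans (norm_nonneg _) hηy
  have hηw0 : (0:ℝ) ≤ ηw := le_trans (norm_nonneg _) hηw
  have hηu0 : (0:ℝ) ≤ ηu := hηu ▸ norm_nonneg _
  have hμ0 : (0:ℝ) ≤ μ := by rw [hμ]; positivity
  have hω0 : (0:ℝ) ≤ ω := by rw [hω]; positivity
  -- state differences
  have key1 : ∀ ξ : V, A (ybar - yhat) ξ - B ξ (pbar - phat) = ⟪ubar - uT, ι ξ⟫ := by
    intro ξ
    have e1 := hst ξ
    have e2 := hsthat ξ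
    have e3 : ⟪f + ubar, ι ξ⟫ - ⟪f + uT, ι ξ⟫ = ⟪ubar - uT, ι ξ⟫ := by
      rw [← inner_sub_left]; congr 1; abel
    simp only [map_sub, LinearMap.sub_apply]
    linarith
  have keyS : ∀ ξ : V, A (ybar - ytilde) ξ - B ξ (pbar - ptilde) = ⟪ubar - utilde, ι ξ⟫ := by
    intro ξ
    have e1 := hst ξ
    have e2 := hsttilde ξ
    have e3 : ⟪f + ubar, ι ξ⟫ - ⟪f + utilde, ι ξ⟫ = ⟪ubar - utilde, ι ξ⟫ := by
      rw [← inner_sub_left]; congr 1; abel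
    simp only [map_sub, LinearMap.sub_apply]
    linarith
  have key2 : ∀ ξ : V, A (yhat - ytilde) ξ - B ξ (phat - ptilde) = ⟪uT - utilde, ι ξ⟫ := by
    intro ξ
    have e1 := hsthat ξ
    have e2 := hsttilde ξ
    have e3 : ⟪f + uT, ι ξ⟫ - ⟪f + utilde, ι ξ⟫ = ⟪uT - utilde, ι ξ⟫ := by
      rw [← inner_sub_left]; congr 1; abel
    simp only [map_sub, LinearMap.sub_apply]
    linarith
  -- adjoint differences
  have key3 : ∀ ζ : V, Cb (wbar - what) ζ + B ζ (qbar - qhat) = ⟪ι (ybar - yT), ι ζ⟫ := by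
    intro ζ
    have e1 := had ζ
    have e2 := hadhat ζ
    have e3 : ⟪ι ybar - yΩ, ι ζ⟫ - ⟪ι yT - yΩ, ι ζ⟫ = ⟪ι ybar - ι yT, ι ζ⟫ := by
      rw [← inner_sub_left]; congr 1; abel
    simp only [map_sub, LinearMap.sub_apply]
    linarith
  have keyA : ∀ ζ : V, Cb (wbar - wtilde) ζ + B ζ (qbar - qtilde) = ⟪ι (ybar - ytilde), ι ζ⟫ := by
    intro ζ
    have e1 := had ζ
    have e2 := hadtilde ζ
    have e3 : ⟪ι ybar - yΩ, ι ζ⟫ - ⟪ι ytilde - yΩ, ι ζ⟫ = ⟪ι ybar - ι ytilde, ι ζ⟫ := by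
      rw [← inner_sub_left]; congr 1; abel
    simp only [map_sub, LinearMap.sub_apply]
    linarith
  have key4 : ∀ ζ : V, Cb (what - wtilde) ζ + B ζ (qhat - qtilde) = ⟪ι (yT - ytilde), ι ζ⟫ := by
    intro ζ
    have e1 := hadhat ζ
    have e2 := hadtilde ζ
    have e3 : ⟪ι yT - yΩ, ι ζ⟫ - ⟪ι ytilde - yΩ, ι ζ⟫ = ⟪ι yT - ι ytilde, ι ζ⟫ := by
      rw [← inner_sub_left]; congr 1; abel
    simp only [map_sub, LinearMap.sub_apply]
    linarith
  -- divergence-free differences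
  have hd1 : ∀ φ : Q, B (ybar - yhat) φ = 0 := by
    intro φ; simp [map_sub, LinearMap.sub_apply, hydiv, hyhatdiv]
  have hdS : ∀ φ : Q, B (ybar - ytilde) φ = 0 := by
    intro φ; simp [map_sub, LinearMap.sub_apply, hydiv, hytildediv]
  have hd2 : ∀ φ : Q, B (yhat - ytilde) φ = 0 := by
    intro φ; simp [map_sub, LinearMap.sub_apply, hyhatdiv, hytildediv]
  have hd3 : ∀ φ : Q, B (wbar - what) φ = 0 := by
    intro φ; simp [map_sub, LinearMap.sub_apply, hwdiv, hwhatdiv]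
  have hdA : ∀ φ : Q, B (wbar - wtilde) φ = 0 := by
    intro φ; simp [map_sub, LinearMap.sub_apply, hwdiv, hwtildediv]
  have hd4 : ∀ φ : Q, B (what - wtilde) φ = 0 := by
    intro φ; simp [map_sub, LinearMap.sub_apply, hwhatdiv, hwtildediv]
  -- Step 1 : ‖ȳ - ŷ‖ ≤ CΩ ‖ū - ū_T‖
  have h1 : ‖ybar - yhat‖ ≤ CΩ * ‖ubar - uT‖ := by
    apply gen_energy ι CΩ hCΩ0 hι
    have hk := key1 (ybar - yhat)
    rw [← hAco (ybar - yhat)]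
    rw [hd1 (pbar - phat)] at hk
    linarith
  -- Step 2 : ‖ŷ - ỹ‖ ≤ CΩ ‖ū_T - ũ‖
  have h2 : ‖yhat - ytilde‖ ≤ CΩ * ‖uT - utilde‖ := by
    apply gen_energy ι CΩ hCΩ0 hι
    have hk := key2 (yhat - ytilde)
    rw [← hAco (yhat - ytilde)]
    rw [hd2 (phat - ptilde)] at hk
    linarith
  -- Step 3 : ‖w̄ - ŵ‖ ≤ CΩ² ‖ȳ - ȳ_T‖
  have h3 : ‖wbar - what‖ ≤ CΩ^2 * ‖ybar - yT‖ := by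
    have h3a : ‖wbar - what‖ ≤ CΩ * ‖ι (ybar - yT)‖ := by
      apply gen_energy ι CΩ hCΩ0 hι
      have hk := key3 (wbar - what)
      rw [← hAco (wbar - what), hAC (wbar - what) (wbar - what)]
      rw [hd3 (qbar - qhat)] at hk
      linarith
    calc ‖wbar - what‖ ≤ CΩ * ‖ι (ybar - yT)‖ := h3a
      _ ≤ CΩ * (CΩ * ‖ybar - yT‖) := by
          exact mul_le_mul_of_nonneg_left (hι _) hCΩ0
      _ = CΩ^2 * ‖ybar - yT‖ := by ring
  -- Step 4 : ‖ŵ - w̃‖ ≤ CΩ² ‖ȳ_T - ỹ‖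
  have h4 : ‖what - wtilde‖ ≤ CΩ^2 * ‖yT - ytilde‖ := by
    have h4a : ‖what - wtilde‖ ≤ CΩ * ‖ι (yT - ytilde)‖ := by
      apply gen_energy ι CΩ hCΩ0 hι
      have hk := key4 (what - wtilde)
      rw [← hAco (what - wtilde), hAC (what - wtilde) (what - wtilde)]
      rw [hd4 (qhat - qtilde)] at hk
      linarith
    calc ‖what - wtilde‖ ≤ CΩ * ‖ι (yT - ytilde)‖ := h4a
      _ ≤ CΩ * (CΩ * ‖yT - ytilde‖) := mul_le_mul_of_nonneg_left (hι _) hCΩ0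
      _ = CΩ^2 * ‖yT - ytilde‖ := by ring
  -- Step 5 : variational inequality argument
  have hA' := hvi utilde hutilde
  have hB' := hvitilde ubar hubar
  have hVIsum : θ * ‖ubar - utilde‖^2 ≤ ⟪ι wbar - ι wT, utilde - ubar⟫ := by
    have expand : ⟪ι wbar + θ • ubar, utilde - ubar⟫ + ⟪ι wT + θ • utilde, ubar - utilde⟫
        = ⟪ι wbar - ι wT, utilde - ubar⟫ - θ * ⟪ubar - utilde, ubar - utilde⟫ := by
      simp only [inner_add_left, inner_sub_left, inner_sub_right, real_inner_smul_left]
      ring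
    rw [real_inner_self_eq_norm_sq] at expand
    linarith
  have hsplit : ⟪ι wbar - ι wT, utilde - ubar⟫
      = ⟪ι (wbar - wtilde), utilde - ubar⟫ + ⟪ι (wtilde - wT), utilde - ubar⟫ := by
    have hadd : (ι (wbar - wtilde) : H) + ι (wtilde - wT) = ι wbar - ι wT := by
      rw [map_sub, map_sub]; abel
    rw [← hadd, inner_add_left]
  have hnegpart : ⟪ι (wbar - wtilde), utilde - ubar⟫ = -‖ι (ybar - ytilde)‖^2 := by
    have hk := keyS (wbar - wtilde)
    rw [hdA (pbar - ptilde)] at hk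
    have hk2 := keyA (ybar - ytilde)
    rw [hdS (qbar - qtilde)] at hk2
    have hcomm : ⟪ι (wbar - wtilde), utilde - ubar⟫ = -⟪ubar - utilde, ι (wbar - wtilde)⟫ := by
      rw [real_inner_comm]
      rw [show utilde - ubar = -(ubar - utilde) by abel, inner_neg_left]
    rw [hcomm, ← hk, hAC (ybar - ytilde) (wbar - wtilde)]
    simp only [add_zero] at hk2
    have hCbval : Cb (wbar - wtilde) (ybar - ytilde) = ‖ι (ybar - ytilde)‖^2 := by
      rw [hk2, real_inner_self_eq_norm_sq]
    rw [hCbval]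
    ring
  have hVI2 : θ * ‖ubar - utilde‖^2 ≤ ⟪ι (wtilde - wT), utilde - ubar⟫ := by
    rw [hsplit, hnegpart] at hVIsum
    have := sq_nonneg ‖(ι (ybar - ytilde) : H)‖
    linarith
  have h5 : ‖ubar - utilde‖ ≤ (CΩ / θ) * ‖wtilde - wT‖ := by
    have hb : ⟪ι (wtilde - wT), utilde - ubar⟫ ≤ ‖ι (wtilde - wT)‖ * ‖utilde - ubar‖ :=
      real_inner_le_norm _ _
    have hb2 := hι (wtilde - wT)
    have hb3 : ‖utilde - ubar‖ = ‖ubar - utilde‖ := norm_sub_rev _ _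
    apply aux_norm_le' (norm_nonneg _) (by positivity)
    rw [show (CΩ / θ * ‖wtilde - wT‖) * ‖ubar - utilde‖
        = (CΩ * ‖wtilde - wT‖ * ‖ubar - utilde‖) / θ by ring, le_div_iff₀ hθ]
    have hb4 : ‖ι (wtilde - wT)‖ * ‖utilde - ubar‖ ≤ CΩ * ‖wtilde - wT‖ * ‖ubar - utilde‖ := by
      rw [hb3]
      exact mul_le_mul_of_nonneg_right hb2 (norm_nonneg _)
    linarith [hVI2, hb, hb4]
  -- Step 6 : pressure estimate via inf-sup
  have hp : ‖pbar - phat‖ ≤ Cis * ((1 + Cct) * CΩ * ‖ubar - uT‖) := by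
    apply hinfsup
    intro ξ
    have hk := key1 ξ
    have habs := abs_le.mp (hAct (ybar - yhat) ξ)
    have hin := abs_le.mp (abs_real_inner_le_norm (ubar - uT) (ι ξ))
    have hι' := hι ξ
    have hmul1 : ‖ybar - yhat‖ * (Cct * ‖ξ‖) ≤ (CΩ * ‖ubar - uT‖) * (Cct * ‖ξ‖) :=
      mul_le_mul_of_nonneg_right h1 (mul_nonneg hCct.le (norm_nonneg ξ))
    have hmul2 : ‖ubar - uT‖ * ‖ι ξ‖ ≤ ‖ubar - uT‖ * (CΩ * ‖ξ‖) :=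
      mul_le_mul_of_nonneg_left hι' (norm_nonneg (ubar - uT))
    linarith [habs.2, hin.1, hk, hmul1, hmul2]
  -- Step 7 : q estimate via inf-sup
  have hq : ‖qbar - qhat‖ ≤ Cis * ((1 + Cct) * CΩ^2 * ‖ybar - yT‖) := by
    apply hinfsup
    intro ζ
    have hk := key3 ζ
    have hCbA : Cb (wbar - what) ζ = A ζ (wbar - what) := (hAC ζ (wbar - what)).symm
    have habs := abs_le.mp (hAct ζ (wbar - what))
    have hin := abs_le.mp (abs_real_inner_le_norm (ι (ybar - yT)) (ι ζ))
    have hι1 := hι (ybar - yT)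
    have hι2 := hι ζ
    have hmm : ‖ι (ybar - yT)‖ * ‖ι ζ‖ ≤ (CΩ * ‖ybar - yT‖) * (CΩ * ‖ζ‖) :=
      mul_le_mul hι1 hι2 (norm_nonneg _) (by positivity)
    have hmul1 : ‖wbar - what‖ * (Cct * ‖ζ‖) ≤ (CΩ^2 * ‖ybar - yT‖) * (Cct * ‖ζ‖) :=
      mul_le_mul_of_nonneg_right h3 (mul_nonneg hCct.le (norm_nonneg ζ))
    linarith [hCbA, habs.2, hin.1, hk, hmm, hmul1]
  -- triangle inequalities
  have t1 : ‖ytilde - yT‖ ≤ CΩ * ηu + ηy := by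
    calc ‖ytilde - yT‖ ≤ ‖ytilde - yhat‖ + ‖yhat - yT‖ :=
          norm_sub_le_norm_sub_add_norm_sub _ _ _
      _ ≤ CΩ * ηu + ηy := by
          have : ‖ytilde - yhat‖ = ‖yhat - ytilde‖ := norm_sub_rev _ _
          have h2' : ‖yhat - ytilde‖ ≤ CΩ * ηu := by
            rw [hηu, show ‖utilde - uT‖ = ‖uT - utilde‖ from norm_sub_rev _ _]
            exact h2
          linarith [hηy]
  have t2 : ‖wtilde - wT‖ ≤ CΩ^2 * ‖ytilde - yT‖ + ηw := by
    calc ‖wtilde - wT‖ ≤ ‖wtilde - what‖ + ‖what - wT‖ :=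
          norm_sub_le_norm_sub_add_norm_sub _ _ _
      _ ≤ CΩ^2 * ‖ytilde - yT‖ + ηw := by
          have e1 : ‖wtilde - what‖ = ‖what - wtilde‖ := norm_sub_rev _ _
          have e2 : ‖yT - ytilde‖ = ‖ytilde - yT‖ := norm_sub_rev _ _
          rw [e1]
          have := h4
          rw [e2] at this
          linarith [hηw]
  -- squared estimates
  have s1 : ‖ytilde - yT‖^2 ≤ 2*(CΩ*ηu)^2 + 2*ηy^2 := sq_le_two' (norm_nonneg _) t1
  have hw2 : ‖wtilde - wT‖^2 ≤ 4*CΩ^6*ηu^2 + 4*CΩ^4*ηy^2 + 2*ηw^2 := by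
    have s2 : ‖wtilde - wT‖^2 ≤ 2*(CΩ^2*‖ytilde - yT‖)^2 + 2*ηw^2 :=
      sq_le_two' (norm_nonneg _) t2
    linarith [s2, mul_le_mul_of_nonneg_left s1 (show (0:ℝ) ≤ 2*CΩ^4 by positivity)]
  have hdu : ‖ubar - utilde‖^2 ≤ μ*CΩ^8*ηu^2 + μ*CΩ^6*ηy^2 + μ/2*CΩ^2*ηw^2 := by
    have hsq : ‖ubar - utilde‖^2 ≤ ((CΩ/θ) * ‖wtilde - wT‖)^2 :=
      pow_le_pow_left₀ (norm_nonneg _) h5 2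
    have hc : (0:ℝ) ≤ CΩ^2/θ^2 := by positivity
    have hmul := mul_le_mul_of_nonneg_left hw2 hc
    rw [hμ]
    have hθ2 : θ^2 ≠ 0 := by positivity
    have e1 : ((CΩ/θ) * ‖wtilde - wT‖)^2 = CΩ^2/θ^2 * ‖wtilde - wT‖^2 := by ring
    have e2 : CΩ^2/θ^2 * (4*CΩ^6*ηu^2 + 4*CΩ^4*ηy^2 + 2*ηw^2)
        = 4/θ^2*CΩ^8*ηu^2 + 4/θ^2*CΩ^6*ηy^2 + (4/θ^2)/2*CΩ^2*ηw^2 := by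
      field_simp; ring
    linarith [hsq.trans (e1 ▸ hmul.trans_eq e2)]
  -- main squared error bounds
  have hEu : ‖ubar - uT‖^2 ≤ 2*μ*CΩ^6*ηy^2 + μ*CΩ^2*ηw^2 + (2+2*μ*CΩ^8)*ηu^2 := by
    have t : ‖ubar - uT‖ ≤ ‖ubar - utilde‖ + ηu := by
      rw [hηu]
      exact norm_sub_le_norm_sub_add_norm_sub _ _ _
    have := sq_le_two' (norm_nonneg _) t
    linarith [hdu, this]
  have hEy : ‖ybar - yT‖^2 ≤ 2*CΩ^2*‖ubar - uT‖^2 + 2*ηy^2 := by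
    have t : ‖ybar - yT‖ ≤ CΩ*‖ubar - uT‖ + ηy := by
      calc ‖ybar - yT‖ ≤ ‖ybar - yhat‖ + ‖yhat - yT‖ :=
            norm_sub_le_norm_sub_add_norm_sub _ _ _
        _ ≤ CΩ*‖ubar - uT‖ + ηy := by linarith [hηy]
    have := sq_le_two' (norm_nonneg _) t
    linarith [this]
  have hEw : ‖wbar - wT‖^2 ≤ 2*CΩ^4*‖ybar - yT‖^2 + 2*ηw^2 := by
    have t : ‖wbar - wT‖ ≤ CΩ^2*‖ybar - yT‖ + ηw := by
      calc ‖wbar - wT‖ ≤ ‖wbar - what‖ + ‖what - wT‖ :=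
            norm_sub_le_norm_sub_add_norm_sub _ _ _
        _ ≤ CΩ^2*‖ybar - yT‖ + ηw := by linarith [hηw]
    have := sq_le_two' (norm_nonneg _) t
    linarith [this]
  have hEp : ‖pbar - pT‖^2 ≤ 2*ω*CΩ^2*‖ubar - uT‖^2 + 2*ηp^2 := by
    have t : ‖pbar - pT‖ ≤ Cis * ((1 + Cct) * CΩ * ‖ubar - uT‖) + ηp := by
      calc ‖pbar - pT‖ ≤ ‖pbar - phat‖ + ‖phat - pT‖ :=
            norm_sub_le_norm_sub_add_norm_sub _ _ _
        _ ≤ _ := by linarith [hηp]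
    have := sq_le_two' (norm_nonneg _) t
    rw [hω]
    linarith [this]
  have hEq : ‖qbar - qT‖^2 ≤ 2*ω*CΩ^4*‖ybar - yT‖^2 + 2*ηq^2 := by
    have t : ‖qbar - qT‖ ≤ Cis * ((1 + Cct) * CΩ^2 * ‖ybar - yT‖) + ηq := by
      calc ‖qbar - qT‖ ≤ ‖qbar - qhat‖ + ‖qhat - qT‖ :=
            norm_sub_le_norm_sub_add_norm_sub _ _ _
        _ ≤ _ := by linarith [hηq]
    have := sq_le_two' (norm_nonneg _) t
    rw [hω]
    linarith [this]
  -- final assembly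
  subst hcy hcw hcu
  have m1 := mul_le_mul_of_nonneg_left hEy
    (show (0:ℝ) ≤ 2*CΩ^4 + 2*ϱ*ω*CΩ^4 by positivity)
  have m2 := mul_le_mul_of_nonneg_left hEu
    (show (0:ℝ) ≤ 1 + 2*CΩ^2 + 2*ϱ*ω*CΩ^2 + (2*CΩ^4 + 2*ϱ*ω*CΩ^4)*(2*CΩ^2) by positivity)
  have c1 := mul_le_mul_of_nonneg_left hEp hϱ
  have c2 := mul_le_mul_of_nonneg_left hEq hϱ
  linarith [hEy, hEw, c1, c2, m1, m2]
end

section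
/- Let V be a real Hilbert space with inner product ⟨·,·⟩_V and induced norm ‖·‖_V, and let Q be a real normed space. Let A : V × V → ℝ and B : V × Q → ℝ be bilinear forms with |A(ξ,ζ)| ≤ C_ct ‖ξ‖_V ‖ζ‖_V for all ξ, ζ ∈ V (C_ct > 0) and satisfying the inf–sup condition ‖φ‖_Q ≤ C_is · sup_{ξ ∈ V, ξ ≠ 0} B(ξ,φ)/‖ξ‖_V for all φ ∈ Q (C_is > 0). Let ŷ, ȳ_T ∈ V, p̂, p̄_T ∈ Q, and let E ∈ V satisfy ⟨E, ξ⟩_V = A(ŷ − ȳ_T, ξ) − B(ξ, p̂ − p̄_T) for all ξ ∈ V. Then ‖p̂ − p̄_T‖_Q ≤ C_is (‖E‖_V + C_ct ‖ŷ − ȳ_T‖_V). -/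
open scoped RealInnerProductSpace

/-- Pressure bound in terms of the Riesz representative `E` of the residual:
`‖p̂ − p̄_T‖_Q ≤ C_is (‖E‖_V + C_ct ‖ŷ − ȳ_T‖_V)`. The inf–sup condition
`‖φ‖_Q ≤ C_is · sup_{ξ ≠ 0} B(ξ,φ)/‖ξ‖_V` is encoded through upper bounds of the set
`{B(ξ,φ)/‖ξ‖_V : ξ ≠ 0}`. -/
theorem stmt_17
    {V Q : Type*}
    [NormedAddCommGroup V] [InnerProductSpace ℝ V] [CompleteSpace V]
    [NormedAddCommGroup Q] [NormedSpace ℝ Q]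
    (A : V →ₗ[ℝ] V →ₗ[ℝ] ℝ) (B : V →ₗ[ℝ] Q →ₗ[ℝ] ℝ)
    (Cct : ℝ) (hCct : 0 < Cct)
    (hAct : ∀ ξ ζ : V, |A ξ ζ| ≤ Cct * ‖ξ‖ * ‖ζ‖)
    (Cis : ℝ) (hCis : 0 < Cis)
    (hinfsup : ∀ φ : Q, ∀ c : ℝ, (∀ ξ : V, B ξ φ ≤ c * ‖ξ‖) → ‖φ‖ ≤ Cis * c)
    (yhat yT : V) (phat pT : Q)
    (E : V) (hE : ∀ ξ : V, ⟪E, ξ⟫ = A (yhat - yT) ξ - B ξ (phat - pT)) :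
    ‖phat - pT‖ ≤ Cis * (‖E‖ + Cct * ‖yhat - yT‖) := by
  apply hinfsup
  intro ξ
  have h := hE ξ
  have h1 : B ξ (phat - pT) = A (yhat - yT) ξ - ⟪E, ξ⟫ := by linarith
  have h2 : A (yhat - yT) ξ ≤ Cct * ‖yhat - yT‖ * ‖ξ‖ :=
    (abs_le.mp (hAct _ _)).2
  have h3 : -⟪E, ξ⟫ ≤ ‖E‖ * ‖ξ‖ := by
    have := abs_real_inner_le_norm E ξ
    have := abs_le.mp this
    linarith [this.1]
  rw [h1]
  nlinarith [norm_nonneg ξ]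
end
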